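/- arXiv:math/0703252 — 7 statements merged into one kernel-verified Lean document; each statement's English description precedes it below -/
import Mathlib

section
/- Let φ_a, φ_b : [0,1] → ℝ be continuous piecewise-affine functions, each constant on [u₂, 1] for some u₂ < 1, such that φ_a(0) = φ_b(0) = 0, φ_a(u) ≥ φ_b(u) for all u ∈ [0,1], and φ_a = φ_b on [u₁, 1] for some u₁ < 1. Then τ(φ_a) ≤ τ(φ_b). -/
/-!
With `w u = 2 / (1 - u) ^ 2`, whose derivative is `4 / (1 - u) ^ 3 ≥ 0` on `[0, 1)`, integrating
by parts on each affine piece gives, for `f` constant on `[c, 1]`,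
`τ f = w c * f c - 2 * f 0 - ∫₀ᶜ 4 / (1 - u) ^ 3 * f u`.
Taking `c ≥ u₁, u₂`, the boundary terms of `φa` and `φb` coincide, so the pointwise larger
function has the smaller twist.
-/

open MeasureTheory Set

/-- `f : ℝ → ℝ` is *continuous piecewise affine* on `[0,1]`: it is continuous on `[0,1]`
and there is a finite partition `0 = t₀ < t₁ < ⋯ < t_m = 1` such that `f` is affine on
each subinterval `[t_{j}, t_{j+1}]`. -/
def CtsPiecewiseAffine (f : ℝ → ℝ) : Prop :=
  ContinuousOn f (Set.Icc (0:ℝ) 1) ∧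
  ∃ (m : ℕ) (t : ℕ → ℝ), 0 < m ∧ t 0 = 0 ∧ t m = 1 ∧
    (∀ j < m, t j < t (j+1)) ∧
    (∀ j < m, ∃ a b : ℝ, ∀ x ∈ Set.Icc (t j) (t (j+1)), f x = a * x + b)

/-- The *twist* of an edgepath-system function `f`:
`τ(f) = ∫₀¹ (2/(1−u)²)·f′(u) du`. -/
noncomputable def twist (f : ℝ → ℝ) : ℝ :=
  ∫ u in (0:ℝ)..1, (2/(1-u)^2) * deriv f u

open intervalIntegral

noncomputable def twistWeight (u : ℝ) : ℝ := 2 / (1 - u) ^ 2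

lemma twist_eq_integral (f : ℝ → ℝ) : twist f = ∫ u in (0:ℝ)..1, twistWeight u * deriv f u := rfl

lemma hasDerivAt_twistWeight {x : ℝ} (hx : x ≠ 1) :
    HasDerivAt twistWeight (4 / (1 - x) ^ 3) x := by
  have hx' : (1 - x) ^ 2 ≠ 0 := pow_ne_zero 2 (sub_ne_zero.mpr hx.symm)
  refine ((hasDerivAt_const x (2 : ℝ)).fun_div
    (((hasDerivAt_id' x).const_sub 1).fun_pow 2) hx').congr_deriv ?_
  field_simp [sub_ne_zero.mpr hx.symm]
  ring

lemma continuousOn_div_one_sub_pow (k : ℝ) (n : ℕ) {s : Set ℝ} (hs : ∀ x ∈ s, x < 1) :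
    ContinuousOn (fun u : ℝ => k / (1 - u) ^ n) s :=
  continuousOn_const.div (by fun_prop) fun x hx => pow_ne_zero n (by linarith [hs x hx])

section AffinePiece

variable {f : ℝ → ℝ} {p q a b : ℝ}

lemma hasDerivAt_of_eqOn_affine (hf : ∀ x ∈ Icc p q, f x = a * x + b) {x : ℝ}
    (hx : x ∈ Ioo p q) : HasDerivAt f a x := by
  have hloc : (fun y => a * y + b) =ᶠ[nhds x] f :=
    Filter.eventually_of_mem (Ioo_mem_nhds hx.1 hx.2) fun y hy => (hf y (Ioo_subset_Icc_self hy)).symm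
  exact (((hasDerivAt_id x).const_mul a).add_const b).congr_of_eventuallyEq hloc.symm |>.congr_deriv
    (mul_one a)

lemma intervalIntegrable_deriv_of_eqOn_affine (hpq : p ≤ q)
    (hf : ∀ x ∈ Icc p q, f x = a * x + b) : IntervalIntegrable (deriv f) volume p q := by
  refine (intervalIntegrable_const : IntervalIntegrable (fun _ => a) volume p q).congr_uIoo
    fun x hx => ?_
  rw [uIoo_of_le hpq] at hx
  exact (hasDerivAt_of_eqOn_affine hf hx).deriv.symm

lemma continuousOn_of_eqOn_affine (hf : ∀ x ∈ Icc p q, f x = a * x + b) :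
    ContinuousOn f (Icc p q) :=
  (continuous_const.mul continuous_id |>.add continuous_const).continuousOn.congr hf

lemma integral_twistWeight_mul_deriv_of_eqOn_affine (hpq : p ≤ q) (hq : q < 1)
    (hf : ∀ x ∈ Icc p q, f x = a * x + b) :
    ∫ u in p..q, twistWeight u * deriv f u
      = twistWeight q * f q - twistWeight p * f p - ∫ u in p..q, 4 / (1 - u) ^ 3 * f u := by
  have hlt : ∀ x ∈ Icc p q, x < 1 := fun x hx => hx.2.trans_lt hq
  rw [← uIcc_of_le hpq] at hlt
  refine integral_mul_deriv_eq_deriv_mul_of_hasDerivAt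
    (continuousOn_div_one_sub_pow 2 2 hlt) ?_ (fun x hx => ?_) (fun x hx => ?_)
    (continuousOn_div_one_sub_pow 4 3 hlt).intervalIntegrable
    (intervalIntegrable_deriv_of_eqOn_affine hpq hf)
  · rw [uIcc_of_le hpq]
    exact continuousOn_of_eqOn_affine hf
  · exact hasDerivAt_twistWeight (hlt x (Ioo_subset_Icc_self hx)).ne
  · rw [min_eq_left hpq, max_eq_right hpq] at hx
    exact (hasDerivAt_of_eqOn_affine hf hx).differentiableAt.hasDerivAt

lemma intervalIntegrable_twistWeight_mul_deriv_of_eqOn_affine (hpq : p ≤ q) (hq : q < 1)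
    (hf : ∀ x ∈ Icc p q, f x = a * x + b) :
    IntervalIntegrable (fun u => twistWeight u * deriv f u) volume p q :=
  (intervalIntegrable_deriv_of_eqOn_affine hpq hf).continuousOn_mul
    (continuousOn_div_one_sub_pow 2 2 fun x hx => by
      rw [uIcc_of_le hpq] at hx; exact hx.2.trans_lt hq)

lemma eqOn_mul_deriv_zero_of_eqOn_const (g : ℝ → ℝ) {k : ℝ} (hf : ∀ x ∈ Icc p q, f x = k) :
    EqOn (fun u => g u * deriv f u) 0 (Ioo p q) := fun x hx => by
  have hd : HasDerivAt f 0 x :=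
    hasDerivAt_of_eqOn_affine (b := k) (fun y hy => by rw [hf y hy]; ring) hx
  simp [hd.deriv]

end AffinePiece

lemma integral_twistWeight_mul_deriv_of_partition {f : ℝ → ℝ} {m : ℕ} {s : ℕ → ℝ}
    (hmono : ∀ j < m, s j ≤ s (j + 1)) (hlt : ∀ j, s j < 1)
    (haff : ∀ j < m, ∃ a b : ℝ, ∀ x ∈ Icc (s j) (s (j + 1)), f x = a * x + b) :
    IntervalIntegrable (fun u => twistWeight u * deriv f u) volume (s 0) (s m) ∧
    ∫ u in s 0..s m, twistWeight u * deriv f u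
      = twistWeight (s m) * f (s m) - twistWeight (s 0) * f (s 0)
        - ∫ u in s 0..s m, 4 / (1 - u) ^ 3 * f u := by
  choose! a b hab using haff
  have hw : ∀ j < m, IntervalIntegrable (fun u => twistWeight u * deriv f u) volume
      (s j) (s (j + 1)) := fun j hj =>
    intervalIntegrable_twistWeight_mul_deriv_of_eqOn_affine (hmono j hj) (hlt _) (hab j hj)
  have hw' : ∀ j < m, IntervalIntegrable (fun u => 4 / (1 - u) ^ 3 * f u) volume
      (s j) (s (j + 1)) := fun j hj => by
    refine ContinuousOn.intervalIntegrable ?_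
    rw [uIcc_of_le (hmono j hj)]
    exact (continuousOn_div_one_sub_pow 4 3 fun x hx => hx.2.trans_lt (hlt _)).mul
      (continuousOn_of_eqOn_affine (hab j hj))
  refine ⟨IntervalIntegrable.trans_iterate hw, ?_⟩
  rw [← sum_integral_adjacent_intervals hw, ← sum_integral_adjacent_intervals hw',
    ← Finset.sum_range_sub (fun j => twistWeight (s j) * f (s j)), ← Finset.sum_sub_distrib]
  refine Finset.sum_congr rfl fun j hj => ?_
  have hj := Finset.mem_range.mp hj
  exact integral_twistWeight_mul_deriv_of_eqOn_affine (hmono j hj) (hlt _) (hab j hj)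

lemma CtsPiecewiseAffine.exists_partition_Icc {f : ℝ → ℝ} (hf : CtsPiecewiseAffine f) {c : ℝ}
    (hc0 : 0 ≤ c) (hc1 : c ≤ 1) :
    ∃ (m : ℕ) (s : ℕ → ℝ), s 0 = 0 ∧ s m = c ∧ (∀ j, s j ≤ c) ∧ (∀ j < m, s j ≤ s (j + 1)) ∧
      ∀ j < m, ∃ a b : ℝ, ∀ x ∈ Icc (s j) (s (j + 1)), f x = a * x + b := by
  obtain ⟨-, m, t, -, ht0, htm, hlt, haff⟩ := hf
  refine ⟨m, fun j => min (t j) c, by simp [ht0, hc0], by simp [htm, hc1],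
    fun j => min_le_right _ _, fun j hj => min_le_min_right c (hlt j hj).le, fun j hj => ?_⟩
  by_cases htc : t j ≤ c
  · obtain ⟨a, b, hab⟩ := haff j hj
    refine ⟨a, b, fun x hx => hab x ⟨?_, hx.2.trans (min_le_left _ _)⟩⟩
    simpa [min_eq_left htc] using hx.1
  · rw [not_le] at htc
    have hsj : min (t j) c = c := min_eq_right htc.le
    have hsj' : min (t (j + 1)) c = c := min_eq_right (htc.trans (hlt j hj)).le
    refine ⟨0, f c, fun x hx => ?_⟩
    simp only [hsj, hsj', Icc_self, mem_singleton_iff] at hx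
    simp [hx]

lemma twist_eq_of_eqOn_Icc_const {f : ℝ → ℝ} (hf : CtsPiecewiseAffine f) {c k : ℝ}
    (hc0 : 0 ≤ c) (hc1 : c < 1) (hconst : ∀ x ∈ Icc c 1, f x = k) :
    twist f = twistWeight c * f c - 2 * f 0 - ∫ u in (0:ℝ)..c, 4 / (1 - u) ^ 3 * f u := by
  obtain ⟨m, s, hs0, hsm, hsc, hmono, haff⟩ := hf.exists_partition_Icc hc0 hc1.le
  obtain ⟨hint, hparts⟩ :=
    integral_twistWeight_mul_deriv_of_partition hmono (fun j => (hsc j).trans_lt hc1) haff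
  rw [hs0, hsm] at hint hparts
  have htail := eqOn_mul_deriv_zero_of_eqOn_const twistWeight hconst
  have htail_int : IntervalIntegrable (fun u => twistWeight u * deriv f u) volume c 1 :=
    (intervalIntegrable_congr_uIoo (uIoo_of_le hc1.le ▸ htail)).mpr intervalIntegrable_const
  rw [twist_eq_integral, ← integral_add_adjacent_intervals hint htail_int, hparts,
    integral_congr_Ioo_of_le hc1.le htail]
  simp [twistWeight]

lemma CtsPiecewiseAffine.intervalIntegrable_mul {f g : ℝ → ℝ} (hf : CtsPiecewiseAffine f) {c : ℝ}
    (hc0 : 0 ≤ c) (hc1 : c ≤ 1) (hg : ContinuousOn g (Icc 0 c)) :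
    IntervalIntegrable (fun u => g u * f u) volume 0 c := by
  refine ContinuousOn.intervalIntegrable ?_
  rw [uIcc_of_le hc0]
  exact hg.mul (hf.1.mono (Icc_subset_Icc_right hc1))

lemma twist_le_twist_of_le {f g : ℝ → ℝ} (hf : CtsPiecewiseAffine f) (hg : CtsPiecewiseAffine g)
    {c k l : ℝ} (hc0 : 0 ≤ c) (hc1 : c < 1) (hfc : ∀ x ∈ Icc c 1, f x = k)
    (hgc : ∀ x ∈ Icc c 1, g x = l) (h0 : f 0 = g 0) (hc : f c = g c)
    (hle : ∀ x ∈ Icc 0 c, g x ≤ f x) : twist f ≤ twist g := by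
  have hw := continuousOn_div_one_sub_pow 4 3 fun x (hx : x ∈ Icc 0 c) => hx.2.trans_lt hc1
  have hint : ∫ u in (0:ℝ)..c, 4 / (1 - u) ^ 3 * g u ≤ ∫ u in (0:ℝ)..c, 4 / (1 - u) ^ 3 * f u :=
    integral_mono_on hc0 (hg.intervalIntegrable_mul hc0 hc1.le hw)
      (hf.intervalIntegrable_mul hc0 hc1.le hw) fun x hx =>
        mul_le_mul_of_nonneg_left (hle x hx) (div_nonneg zero_le_four
          (pow_nonneg (by linarith [hx.2]) 3))
  rw [twist_eq_of_eqOn_Icc_const hf hc0 hc1 hfc, twist_eq_of_eqOn_Icc_const hg hc0 hc1 hgc, h0, hc]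
  linarith

/-- (Claim in the proof of Lemma 3.3.) If `φ_a` and `φ_b` are continuous piecewise-affine
functions on `[0,1]`, each constant on `[u₂,1]` for some `u₂ < 1`, with
`φ_a 0 = φ_b 0 = 0`, `φ_a ≥ φ_b` on `[0,1]`, and `φ_a = φ_b` on `[u₁,1]` for some
`u₁ < 1`, then `τ(φ_a) ≤ τ(φ_b)`. -/
theorem stmt1 (φa φb : ℝ → ℝ)
    (hφa : CtsPiecewiseAffine φa) (hφb : CtsPiecewiseAffine φb)
    (u₂ : ℝ) (hu₂ : u₂ < 1)
    (hca : ∃ c : ℝ, ∀ u ∈ Set.Icc u₂ (1:ℝ), φa u = c)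
    (hcb : ∃ c : ℝ, ∀ u ∈ Set.Icc u₂ (1:ℝ), φb u = c)
    (ha0 : φa 0 = 0) (hb0 : φb 0 = 0)
    (hge : ∀ u ∈ Set.Icc (0:ℝ) 1, φb u ≤ φa u)
    (u₁ : ℝ) (hu₁ : u₁ < 1)
    (heq : ∀ u ∈ Set.Icc u₁ (1:ℝ), φa u = φb u) :
    twist φa ≤ twist φb := by
  obtain ⟨ka, hka⟩ := hca
  obtain ⟨kb, hkb⟩ := hcb
  set c := max u₂ (max u₁ 0)
  have hc0 : 0 ≤ c := le_max_of_le_right (le_max_right _ _)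
  have hc1 : c < 1 := max_lt hu₂ (max_lt hu₁ one_pos)
  have hu₂c : u₂ ≤ c := le_max_left _ _
  have hu₁c : u₁ ≤ c := le_max_of_le_right (le_max_left _ _)
  exact twist_le_twist_of_le hφa hφb hc0 hc1 (fun x hx => hka x ⟨hu₂c.trans hx.1, hx.2⟩)
    (fun x hx => hkb x ⟨hu₂c.trans hx.1, hx.2⟩) (ha0.trans hb0.symm) (heq c ⟨hu₁c, hc1.le⟩)
    fun x hx => hge x ⟨hx.1, hx.2.trans hc1.le⟩
end

section
/- Let ψ : [0,1] → ℝ be continuous piecewise affine and constant on [u₂, 1] for some u₂ < 1. Let φ : [0,1] → ℝ be continuous piecewise affine with φ(0) = 0, φ(u) ≥ ψ(u) for all u ∈ [0,1], and φ = ψ on [u₁, 1] for some u₁ < 1. Then τ(φ) ≤ τ(ψ) + 2·ψ(0). In particular, if ψ(0) ≤ −1 then τ(φ) ≤ τ(ψ) − 2. -/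
open MeasureTheory Set

/-!
Integrate by parts against the weight `w u = 2 / (1 - u) ^ 2`, whose derivative
`w' u = 4 / (1 - u) ^ 3` is nonnegative on `[0, 1)`. For a piecewise-affine `f` that ends at the
constant value `C` this gives `τ f = 2 (C - f 0) - ∫₀¹ w' (f - C)`: the weight blows up at `1`,
but `f - C` vanishes near `1`, so the boundary term there is `0`. Since `φ` and `ψ` end at the same
value and `ψ ≤ φ`, the integral for `φ` is the larger one, so
`τ φ - τ ψ ≤ 2 (ψ 0 - φ 0) = 2 ψ 0`.
-/

lemma hasDerivAt_two_div_one_sub_sq {u : ℝ} (hu : u ≠ 1) :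
    HasDerivAt (fun x : ℝ => 2 / (1 - x) ^ 2) (4 / (1 - u) ^ 3) u := by
  have h : (1 - u) ^ 2 ≠ 0 := pow_ne_zero 2 (sub_ne_zero.mpr hu.symm)
  have h₁ : HasDerivAt (fun x : ℝ => 1 - x) (-1) u := (hasDerivAt_id' u).const_sub 1
  refine ((hasDerivAt_const u (2 : ℝ)).fun_div (h₁.fun_pow 2) h).congr_deriv ?_
  field_simp
  ring

lemma continuousOn_div_one_sub_pow_s2 {p q : ℝ} (hq : q < 1) (c : ℝ) (k : ℕ) :
    ContinuousOn (fun u : ℝ => c / (1 - u) ^ k) (Icc p q) :=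
  continuousOn_const.div (by fun_prop) fun u hu => pow_ne_zero k (by linarith [hu.2])

lemma deriv_eq_of_eqOn_Icc {f g : ℝ → ℝ} {p q u : ℝ} (h : EqOn f g (Icc p q))
    (hu : u ∈ Ioo p q) : deriv f u = deriv g u :=
  (Filter.eventuallyEq_of_mem (Icc_mem_nhds hu.1 hu.2) h).deriv_eq

def TwistByPartsOn (f : ℝ → ℝ) (C p q : ℝ) : Prop :=
  IntervalIntegrable (fun u => 2 / (1 - u) ^ 2 * deriv f u) volume p q ∧
  IntervalIntegrable (fun u => 4 / (1 - u) ^ 3 * (f u - C)) volume p q ∧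
  ∫ u in p..q, 2 / (1 - u) ^ 2 * deriv f u =
    2 / (1 - q) ^ 2 * (f q - C) - 2 / (1 - p) ^ 2 * (f p - C)
      - ∫ u in p..q, 4 / (1 - u) ^ 3 * (f u - C)

namespace TwistByPartsOn

variable {f : ℝ → ℝ} {C p q r : ℝ}

lemma refl (f : ℝ → ℝ) (C p : ℝ) : TwistByPartsOn f C p p :=
  ⟨.refl, .refl, by simp⟩

lemma trans (hpq : TwistByPartsOn f C p q) (hqr : TwistByPartsOn f C q r) :
    TwistByPartsOn f C p r := by
  obtain ⟨hd₁, hw₁, he₁⟩ := hpq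
  obtain ⟨hd₂, hw₂, he₂⟩ := hqr
  refine ⟨hd₁.trans hd₂, hw₁.trans hw₂, ?_⟩
  rw [← intervalIntegral.integral_add_adjacent_intervals hd₁ hd₂,
    ← intervalIntegral.integral_add_adjacent_intervals hw₁ hw₂, he₁, he₂]
  ring

lemma of_eqOn_affine {a b : ℝ} (hpq : p ≤ q) (hq : q < 1)
    (hf : EqOn f (fun x => a * x + b) (Icc p q)) : TwistByPartsOn f C p q := by
  have hIoo : EqOn (fun u => 2 / (1 - u) ^ 2 * a) (fun u => 2 / (1 - u) ^ 2 * deriv f u)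
      (uIoo p q) := fun u hu => by
    rw [uIoo_of_le hpq] at hu
    simp [deriv_eq_of_eqOn_Icc hf hu]
  have hIcc : EqOn (fun u => 4 / (1 - u) ^ 3 * (a * u + b - C))
      (fun u => 4 / (1 - u) ^ 3 * (f u - C)) (uIcc p q) := fun u hu => by
    rw [uIcc_of_le hpq] at hu
    simp [hf hu]
  have hw : IntervalIntegrable (fun u => 2 / (1 - u) ^ 2 * a) volume p q :=
    ((continuousOn_div_one_sub_pow_s2 hq 2 2).mul continuousOn_const).intervalIntegrable_of_Icc hpq
  have hw' : IntervalIntegrable (fun u => 4 / (1 - u) ^ 3 * (a * u + b - C)) volume p q :=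
    ((continuousOn_div_one_sub_pow_s2 hq 4 3).mul (by fun_prop)).intervalIntegrable_of_Icc hpq
  refine ⟨hw.congr_uIoo hIoo, hw'.congr (hIcc.mono uIoc_subset_uIcc), ?_⟩
  have hparts := intervalIntegral.integral_mul_deriv_eq_deriv_mul
    (u := fun x => 2 / (1 - x) ^ 2) (v := fun x => a * x + b - C)
    (fun x hx => hasDerivAt_two_div_one_sub_sq (by rw [uIcc_of_le hpq] at hx; linarith [hx.2]))
    (fun x _ => ((((hasDerivAt_id' x).const_mul a).add_const b).sub_const C).congr_deriv
      (mul_one a))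
    ((continuousOn_div_one_sub_pow_s2 hq 4 3).intervalIntegrable_of_Icc hpq) intervalIntegrable_const
  rw [← intervalIntegral.integral_congr_uIoo hIoo, ← intervalIntegral.integral_congr hIcc,
    hf ⟨hpq, le_rfl⟩, hf ⟨le_rfl, hpq⟩]
  exact hparts

lemma of_eqOn_const (hpq : p ≤ q) (hf : EqOn f (fun _ => C) (Icc p q)) :
    TwistByPartsOn f C p q := by
  have hIoo : EqOn (fun _ => 0) (fun u => 2 / (1 - u) ^ 2 * deriv f u) (uIoo p q) :=
    fun u hu => by
      rw [uIoo_of_le hpq] at hu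
      simp [deriv_eq_of_eqOn_Icc hf hu]
  have hIcc : EqOn (fun _ => 0) (fun u => 4 / (1 - u) ^ 3 * (f u - C)) (uIcc p q) :=
    fun u hu => by
      rw [uIcc_of_le hpq] at hu
      simp [hf hu]
  refine ⟨intervalIntegrable_const.congr_uIoo hIoo,
    intervalIntegrable_const.congr (hIcc.mono uIoc_subset_uIcc), ?_⟩
  rw [← intervalIntegral.integral_congr_uIoo hIoo, ← intervalIntegral.integral_congr hIcc,
    hf ⟨hpq, le_rfl⟩, hf ⟨le_rfl, hpq⟩]
  simp

lemma twist_eq (h : TwistByPartsOn f C 0 1) (h₁ : f 1 = C) :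
    twist f = 2 * (C - f 0) - ∫ u in (0 : ℝ)..1, 4 / (1 - u) ^ 3 * (f u - C) := by
  rw [twist, h.2.2, h₁]
  ring

end TwistByPartsOn

lemma eqOn_const_of_eqOn_affine {f : ℝ → ℝ} {a b c p q C : ℝ}
    (hf : EqOn f (fun x => a * x + b) (Icc p q)) (hC : EqOn f (fun _ => C) (Icc c q))
    (hpq : p < q) (hcq : c < q) : EqOn f (fun _ => C) (Icc p q) := by
  have hx : max p c < q := max_lt hpq hcq
  have h₁ : a * max p c + b = C :=
    (hf ⟨le_max_left p c, hx.le⟩).symm.trans (hC ⟨le_max_right p c, hx.le⟩)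
  have h₂ : a * q + b = C := (hf ⟨hpq.le, le_rfl⟩).symm.trans (hC ⟨hcq.le, le_rfl⟩)
  have ha : a = 0 := by
    have : a * (q - max p c) = 0 := by linarith
    exact (mul_eq_zero.1 this).resolve_right (sub_ne_zero.2 hx.ne')
  intro x hx
  simpa [hf hx, ha] using h₂

lemma CtsPiecewiseAffine.twistByPartsOn {f : ℝ → ℝ} (hf : CtsPiecewiseAffine f) {c C : ℝ}
    (hc : c < 1) (hC : EqOn f (fun _ => C) (Icc c 1)) : TwistByPartsOn f C 0 1 := by
  obtain ⟨-, m, t, -, ht₀, htm, hlt, haff⟩ := hf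
  have hmono : StrictMonoOn t (Iic m) := strictMonoOn_Iic_of_lt_succ fun j hj => hlt j hj
  have hpiece : ∀ j < m, TwistByPartsOn f C (t j) (t (j + 1)) := by
    intro j hj
    obtain ⟨a, b, hab⟩ := haff j hj
    have hle : t (j + 1) ≤ 1 :=
      htm ▸ hmono.monotoneOn (mem_Iic.2 hj) (mem_Iic.2 le_rfl) hj
    rcases hle.lt_or_eq with hq | hq
    · exact .of_eqOn_affine (hlt j hj).le hq hab
    · -- the weight is not integrable up to `1`, but on this last piece `f` is constant
      refine .of_eqOn_const (hlt j hj).le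
        (eqOn_const_of_eqOn_affine (c := c) hab ?_ (hlt j hj) (hq ▸ hc))
      rwa [hq]
  have hall : ∀ k ≤ m, TwistByPartsOn f C (t 0) (t k) := by
    intro k hk
    induction k with
    | zero => exact .refl f C (t 0)
    | succ k ih => exact (ih (by omega)).trans (hpiece k hk)
  simpa [ht₀, htm] using hall m le_rfl

/-- (Function-level form of Lemma 3.3(1).) Let `ψ` be continuous piecewise affine on
`[0,1]`, constant on `[u₂,1]` for some `u₂ < 1`. Let `φ` be continuous piecewise affine
with `φ 0 = 0`, `φ ≥ ψ` on `[0,1]`, and `φ = ψ` on `[u₁,1]` for some `u₁ < 1`.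
Then `τ(φ) ≤ τ(ψ) + 2·ψ(0)`; in particular if `ψ(0) ≤ −1` then `τ(φ) ≤ τ(ψ) − 2`. -/
theorem stmt2 (ψ : ℝ → ℝ) (hψ : CtsPiecewiseAffine ψ)
    (u₂ : ℝ) (hu₂ : u₂ < 1)
    (hc : ∃ c : ℝ, ∀ u ∈ Set.Icc u₂ (1:ℝ), ψ u = c)
    (φ : ℝ → ℝ) (hφ : CtsPiecewiseAffine φ) (hφ0 : φ 0 = 0)
    (hge : ∀ u ∈ Set.Icc (0:ℝ) 1, ψ u ≤ φ u)
    (u₁ : ℝ) (hu₁ : u₁ < 1)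
    (heq : ∀ u ∈ Set.Icc u₁ (1:ℝ), φ u = ψ u) :
    twist φ ≤ twist ψ + 2 * ψ 0 ∧ (ψ 0 ≤ -1 → twist φ ≤ twist ψ - 2) := by
  obtain ⟨C, hψC⟩ := hc
  have hc : max u₁ u₂ < 1 := max_lt hu₁ hu₂
  have hψC' : EqOn ψ (fun _ => C) (Icc (max u₁ u₂) 1) := fun u hu =>
    hψC u ⟨le_of_max_le_right hu.1, hu.2⟩
  have hφC' : EqOn φ (fun _ => C) (Icc (max u₁ u₂) 1) := fun u hu =>
    (heq u ⟨le_of_max_le_left hu.1, hu.2⟩).trans (hψC' hu)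
  have hψ' := hψ.twistByPartsOn hc hψC'
  have hφ' := hφ.twistByPartsOn hc hφC'
  have hint_le : ∫ u in (0 : ℝ)..1, 4 / (1 - u) ^ 3 * (ψ u - C)
      ≤ ∫ u in (0 : ℝ)..1, 4 / (1 - u) ^ 3 * (φ u - C) :=
    intervalIntegral.integral_mono_on zero_le_one hψ'.2.1 hφ'.2.1 fun u hu =>
      mul_le_mul_of_nonneg_left (by linarith [hge u hu])
        (div_nonneg (by norm_num) (pow_nonneg (by linarith [hu.2]) 3))
  have htwist : twist φ ≤ twist ψ + 2 * ψ 0 := by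
    rw [hφ'.twist_eq (hφC' ⟨hc.le, le_rfl⟩), hψ'.twist_eq (hψC' ⟨hc.le, le_rfl⟩), hφ0]
    linarith
  exact ⟨htwist, fun h => by linarith⟩
end

section
/- Let ψ : [0,1] → ℝ be continuous piecewise affine, constant on [u₂, 1] for some u₂ < 1, affine on [0, 1/2], with ψ(0) = −1 and ψ(1/2) < 0. Let φ : [0,1] → ℝ be continuous piecewise affine such that: φ = 0 on [0, u₀] for some u₀ ∈ (0,1); φ(u) ≥ ψ(u) for all u ∈ [0,1]; φ = ψ on [u₁, 1] for some u₁ < 1; and, in case u₀ < 1/2, φ is affine on [u₀, 1/2]. Then τ(φ) ≤ τ(ψ) − 4. -/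
/-!
Since `u ↦ 2/(1-u)²` has derivative `4/(1-u)³`, integrating by parts over the affine pieces
(the boundary terms telescope) shows that for `f` equal to a constant `c` near `1`
`τ(f) = -2 (f 0 - c) - ∫₀¹ 4/(1-u)³ (f u - c) du`.
With `φ 0 = 0` and `ψ 0 = -1` this gives `τ(φ) - τ(ψ) = -2 - ∫₀¹ 4/(1-u)³ (φ - ψ)`.
Now `φ - ψ ≥ 0` everywhere, and on `[0, 1/2]` even `φ - ψ ≥ 1 - 2u`: for `u ≤ u₀` because the
affine `ψ` lies below the chord `2u - 1`, for `u ≥ u₀` because `φ - ψ - (1 - 2u)` is affine and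
nonnegative at both ends. So the integral is at least `∫₀^{1/2} 4(1-2u)/(1-u)³ du = 2`.
-/

open MeasureTheory Set

lemma hasDerivAt_two_div_one_sub_sq_mul {g : ℝ → ℝ} {g' x : ℝ} (hg : HasDerivAt g g' x)
    (hx : x ≠ 1) :
    HasDerivAt (fun u => 2 / (1 - u) ^ 2 * g u)
      (2 / (1 - x) ^ 2 * g' + 4 / (1 - x) ^ 3 * g x) x := by
  have hx' : 1 - x ≠ 0 := sub_ne_zero.mpr hx.symm
  have hw : HasDerivAt (fun u => 2 / (1 - u) ^ 2) (4 / (1 - x) ^ 3) x := by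
    refine ((hasDerivAt_const x (2 : ℝ)).fun_div (((hasDerivAt_id x).const_sub 1).fun_pow 2)
      (pow_ne_zero 2 hx')).congr_deriv ?_
    simp only [id]
    field_simp
    ring
  exact (hw.fun_mul hg).congr_deriv (by ring)

lemma hasDerivAt_of_affine_on_Icc {f : ℝ → ℝ} {p q a b x : ℝ}
    (hf : ∀ y ∈ Icc p q, f y = a * y + b) (hx : x ∈ Ioo p q) : HasDerivAt f a x := by
  have h : HasDerivAt (fun y => a * y + b) a x := by
    simpa using ((hasDerivAt_id x).const_mul a).add_const b
  exact h.congr_of_eventuallyEq (Filter.eventuallyEq_of_mem (Icc_mem_nhds hx.1 hx.2) hf)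

lemma twist_integral_by_parts_of_affine {f : ℝ → ℝ} {p q a b : ℝ} (c : ℝ) (hpq : p ≤ q)
    (hq : q < 1) (hf : ∀ x ∈ Icc p q, f x = a * x + b) :
    IntervalIntegrable (fun u => 2 / (1 - u) ^ 2 * deriv f u + 4 / (1 - u) ^ 3 * (f u - c))
        volume p q ∧
      ∫ u in p..q, (2 / (1 - u) ^ 2 * deriv f u + 4 / (1 - u) ^ 3 * (f u - c))
        = 2 / (1 - q) ^ 2 * (f q - c) - 2 / (1 - p) ^ 2 * (f p - c) := by
  set H : ℝ → ℝ := fun u => 2 / (1 - u) ^ 2 * a + 4 / (1 - u) ^ 3 * (a * u + b - c)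
  have hne : ∀ x ∈ uIcc p q, x ≠ 1 := fun x hx =>
    ((uIcc_of_le hpq ▸ hx).2.trans_lt hq).ne
  have hderiv : ∀ x ∈ uIcc p q, HasDerivAt (fun u => 2 / (1 - u) ^ 2 * (a * u + b - c)) (H x) x :=
    fun x hx => hasDerivAt_two_div_one_sub_sq_mul
      (by simpa using (((hasDerivAt_id x).const_mul a).add_const b).sub_const c) (hne x hx)
  have hH : IntervalIntegrable H volume p q := by
    refine ContinuousOn.intervalIntegrable fun x hx => ContinuousAt.continuousWithinAt ?_
    have : 1 - x ≠ 0 := sub_ne_zero.mpr (hne x hx).symm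
    fun_prop (disch := positivity)
  have hEq : EqOn H (fun u => 2 / (1 - u) ^ 2 * deriv f u + 4 / (1 - u) ^ 3 * (f u - c))
      (Ioo p q) := fun x hx => by
    simp only [H, (hasDerivAt_of_affine_on_Icc hf hx).deriv, hf x (Ioo_subset_Icc_self hx)]
  refine ⟨hH.congr_uIoo (uIoo_of_le hpq ▸ hEq), ?_⟩
  rw [← intervalIntegral.integral_congr_Ioo_of_le hpq hEq,
    intervalIntegral.integral_eq_sub_of_hasDerivAt hderiv hH,
    hf q ⟨hpq, le_rfl⟩, hf p ⟨le_rfl, hpq⟩]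

lemma integral_eq_sub_of_pieces {H g : ℝ → ℝ} {t : ℕ → ℝ} {m : ℕ}
    (h : ∀ j < m, IntervalIntegrable H volume (t j) (t (j + 1)) ∧
      ∫ x in t j..t (j + 1), H x = g (t (j + 1)) - g (t j)) :
    IntervalIntegrable H volume (t 0) (t m) ∧ ∫ x in t 0..t m, H x = g (t m) - g (t 0) := by
  have hint : ∀ j < m, IntervalIntegrable H volume (t j) (t (j + 1)) := fun j hj => (h j hj).1
  refine ⟨IntervalIntegrable.trans_iterate hint, ?_⟩
  rw [← intervalIntegral.sum_integral_adjacent_intervals hint,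
    Finset.sum_congr rfl fun j hj => (h j (Finset.mem_range.mp hj)).2]
  exact Finset.sum_range_sub (fun j => g (t j)) m

lemma exists_affine_Icc_min {f : ℝ → ℝ} {p q : ℝ} (s : ℝ) (hpq : p ≤ q)
    (h : ∃ a b : ℝ, ∀ x ∈ Icc p q, f x = a * x + b) :
    ∃ a b : ℝ, ∀ x ∈ Icc (min p s) (min q s), f x = a * x + b := by
  rcases le_or_gt p s with hps | hsp
  · obtain ⟨a, b, hab⟩ := h
    refine ⟨a, b, fun x hx => hab x ⟨?_, hx.2.trans (min_le_left _ _)⟩⟩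
    simpa [min_eq_left hps] using hx.1
  · refine ⟨0, f s, fun x hx => ?_⟩
    rw [min_eq_right hsp.le, min_eq_right (hsp.trans_le hpq).le] at hx
    simp [le_antisymm hx.2 hx.1]

lemma twist_integral_by_parts_of_ctsPiecewiseAffine {f : ℝ → ℝ} (hf : CtsPiecewiseAffine f)
    (c : ℝ) {s : ℝ} (hs0 : 0 ≤ s) (hs1 : s < 1) :
    IntervalIntegrable (fun u => 2 / (1 - u) ^ 2 * deriv f u + 4 / (1 - u) ^ 3 * (f u - c))
        volume 0 s ∧
      ∫ u in (0)..s, (2 / (1 - u) ^ 2 * deriv f u + 4 / (1 - u) ^ 3 * (f u - c))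
        = 2 / (1 - s) ^ 2 * (f s - c) - 2 * (f 0 - c) := by
  obtain ⟨-, m, t, -, ht0, htm, hlt, haff⟩ := hf
  -- Cutting the partition off at `s` keeps every piece away from the pole at `1`.
  have h := integral_eq_sub_of_pieces (t := fun j => min (t j) s) (m := m)
    (g := fun u => 2 / (1 - u) ^ 2 * (f u - c)) fun j hj => by
      obtain ⟨a, b, hab⟩ := exists_affine_Icc_min s (hlt j hj).le (haff j hj)
      exact twist_integral_by_parts_of_affine c (min_le_min_right s (hlt j hj).le)
        ((min_le_right _ _).trans_lt hs1) hab
  simpa [ht0, htm, hs0, hs1.le] using h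

lemma twist_add_integral_eq {f : ℝ → ℝ} (hf : CtsPiecewiseAffine f) {s c : ℝ} (hs0 : 0 ≤ s)
    (hs1 : s < 1) (hc : ∀ u ∈ Icc s 1, f u = c) :
    IntervalIntegrable (fun u => 4 / (1 - u) ^ 3 * (f u - c)) volume 0 1 ∧
      twist f + ∫ u in (0)..1, 4 / (1 - u) ^ 3 * (f u - c) = -2 * (f 0 - c) := by
  obtain ⟨hH0s, hH_eq⟩ := twist_integral_by_parts_of_ctsPiecewiseAffine hf c hs0 hs1
  set W := fun u => 4 / (1 - u) ^ 3 * (f u - c)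
  set H := fun u => 2 / (1 - u) ^ 2 * deriv f u + W u
  have hW_zero : EqOn W (fun _ => 0) (Ioo s 1) := fun u hu => by
    simp [W, hc u (Ioo_subset_Icc_self hu)]
  have hH_zero : EqOn H (fun _ => 0) (Ioo s 1) := fun u hu => by
    have hd := hasDerivAt_of_affine_on_Icc (f := f) (a := 0) (b := c)
      (fun y hy => by simp [hc y hy]) hu
    simp [H, hd.deriv, hW_zero hu]
  have hW0s : IntervalIntegrable W volume 0 s := by
    refine ContinuousOn.intervalIntegrable ?_
    rw [uIcc_of_le hs0]
    refine ContinuousOn.mul (ContinuousOn.div continuousOn_const (by fun_prop) fun x hx => ?_)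
      ((hf.1.mono (Icc_subset_Icc_right hs1.le)).sub continuousOn_const)
    exact pow_ne_zero 3 (sub_ne_zero.mpr (hx.2.trans_lt hs1).ne')
  have hW : IntervalIntegrable W volume 0 1 :=
    hW0s.trans (intervalIntegrable_const.congr_uIoo (uIoo_of_le hs1.le ▸ hW_zero.symm))
  have hHs1 : IntervalIntegrable H volume s 1 :=
    intervalIntegrable_const.congr_uIoo (uIoo_of_le hs1.le ▸ hH_zero.symm)
  refine ⟨hW, ?_⟩
  calc twist f + ∫ u in (0)..1, W u = (∫ u in (0)..1, (H u - W u)) + ∫ u in (0)..1, W u := by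
        simp only [twist, H, add_sub_cancel_right]
    _ = ∫ u in (0)..1, H u := by
        rw [← intervalIntegral.integral_add ((hH0s.trans hHs1).sub hW) hW]
        simp only [sub_add_cancel]
    _ = ∫ u in (0)..s, H u := by
        rw [← intervalIntegral.integral_add_adjacent_intervals hH0s hHs1,
          intervalIntegral.integral_congr_Ioo_of_le hs1.le hH_zero]
        simp
    _ = -2 * (f 0 - c) := by rw [hH_eq, hc s ⟨le_rfl, hs1.le⟩]; ring

lemma intervalIntegrable_four_div_one_sub_pow_three_mul_one_sub_two_mul :
    IntervalIntegrable (fun u : ℝ => 4 / (1 - u) ^ 3 * (1 - 2 * u)) volume 0 (1 / 2) := by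
  refine ContinuousOn.intervalIntegrable fun x hx => ContinuousAt.continuousWithinAt ?_
  rw [uIcc_of_le (by norm_num)] at hx
  have : 1 - x ≠ 0 := by linarith [hx.2]
  fun_prop (disch := positivity)

lemma integral_four_div_one_sub_pow_three_mul_one_sub_two_mul :
    ∫ u in (0)..(1 / 2 : ℝ), 4 / (1 - u) ^ 3 * (1 - 2 * u) = 2 := by
  have hne : ∀ x ∈ uIcc (0 : ℝ) (1 / 2), x ≠ 1 := fun x hx => by
    rw [uIcc_of_le (by norm_num)] at hx
    linarith [hx.2]
  have hderiv : ∀ x ∈ uIcc (0 : ℝ) (1 / 2),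
      HasDerivAt (fun u => 2 / (1 - u) ^ 2 * (3 - 4 * u)) (4 / (1 - x) ^ 3 * (1 - 2 * x)) x := by
    intro x hx
    have hx' : 1 - x ≠ 0 := sub_ne_zero.mpr (hne x hx).symm
    refine (hasDerivAt_two_div_one_sub_sq_mul
      (by simpa using ((hasDerivAt_id x).const_mul 4).const_sub 3) (hne x hx)).congr_deriv ?_
    field_simp
    ring
  rw [intervalIntegral.integral_eq_sub_of_hasDerivAt hderiv
    intervalIntegrable_four_div_one_sub_pow_three_mul_one_sub_two_mul]
  norm_num

lemma two_le_integral_four_div_one_sub_pow_three_mul {g : ℝ → ℝ}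
    (hg : IntervalIntegrable (fun u => 4 / (1 - u) ^ 3 * g u) volume 0 1)
    (hg_nonneg : ∀ u ∈ Icc (1 / 2 : ℝ) 1, 0 ≤ g u)
    (hg_ge : ∀ u ∈ Icc (0 : ℝ) (1 / 2), 1 - 2 * u ≤ g u) :
    2 ≤ ∫ u in (0)..1, 4 / (1 - u) ^ 3 * g u := by
  have hweight : ∀ u ≤ (1 : ℝ), 0 ≤ 4 / (1 - u) ^ 3 := fun u hu => by
    have : 0 ≤ 1 - u := sub_nonneg.mpr hu
    positivity
  have hg₁ : IntervalIntegrable (fun u => 4 / (1 - u) ^ 3 * g u) volume 0 (1 / 2) :=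
    hg.mono_set (uIcc_subset_uIcc_left (by norm_num))
  have hg₂ : IntervalIntegrable (fun u => 4 / (1 - u) ^ 3 * g u) volume (1 / 2) 1 :=
    hg.mono_set (uIcc_subset_uIcc_right (by norm_num))
  have hlow : 2 ≤ ∫ u in (0)..(1 / 2 : ℝ), 4 / (1 - u) ^ 3 * g u := by
    refine integral_four_div_one_sub_pow_three_mul_one_sub_two_mul.ge.trans
      (intervalIntegral.integral_mono_on (by norm_num)
        intervalIntegrable_four_div_one_sub_pow_three_mul_one_sub_two_mul hg₁ fun u hu =>
      mul_le_mul_of_nonneg_left (hg_ge u hu) (hweight u (by linarith [hu.2])))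
  have hhigh : 0 ≤ ∫ u in (1 / 2 : ℝ)..1, 4 / (1 - u) ^ 3 * g u :=
    intervalIntegral.integral_nonneg (by norm_num) fun u hu =>
      mul_nonneg (hweight u hu.2) (hg_nonneg u hu)
  rw [← intervalIntegral.integral_add_adjacent_intervals hg₁ hg₂]
  linarith

lemma nonneg_of_affine_nonneg_endpoints {a b p q x : ℝ} (hx : x ∈ Icc p q)
    (hp : 0 ≤ a * p + b) (hq : 0 ≤ a * q + b) : 0 ≤ a * x + b := by
  rcases le_total 0 a with ha | ha
  · nlinarith [mul_le_mul_of_nonneg_left hx.1 ha]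
  · nlinarith [mul_le_mul_of_nonpos_left hx.2 ha]

lemma le_two_mul_sub_one_of_affine {ψ : ℝ → ℝ}
    (haff : ∃ a b : ℝ, ∀ x ∈ Icc (0 : ℝ) (1 / 2), ψ x = a * x + b)
    (h0 : ψ 0 = -1) (hhalf : ψ (1 / 2) ≤ 0) :
    ∀ u ∈ Icc (0 : ℝ) (1 / 2), ψ u ≤ 2 * u - 1 := by
  obtain ⟨a, b, hab⟩ := haff
  intro u hu
  have h0' := hab 0 ⟨le_rfl, by norm_num⟩
  have hhalf' := hab (1 / 2) ⟨by norm_num, le_rfl⟩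
  have := nonneg_of_affine_nonneg_endpoints (a := 2 - a) (b := -1 - b) hu
    (by linarith) (by linarith)
  linarith [hab u hu]

lemma one_sub_two_mul_le_sub {φ ψ : ℝ → ℝ} {u₀ : ℝ} (hu₀ : 0 ≤ u₀)
    (hψ : ∀ u ∈ Icc (0 : ℝ) (1 / 2), ψ u ≤ 2 * u - 1)
    (haffψ : ∃ a b : ℝ, ∀ x ∈ Icc (0 : ℝ) (1 / 2), ψ x = a * x + b)
    (hφ0 : ∀ u ∈ Icc 0 u₀, φ u = 0) (hhalf : ψ (1 / 2) ≤ φ (1 / 2))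
    (haffφ : u₀ < 1 / 2 → ∃ a b : ℝ, ∀ x ∈ Icc u₀ (1 / 2), φ x = a * x + b) :
    ∀ u ∈ Icc (0 : ℝ) (1 / 2), 1 - 2 * u ≤ φ u - ψ u := by
  intro u hu
  rcases le_or_gt u u₀ with hle | hlt
  · rw [hφ0 u ⟨hu.1, hle⟩]
    linarith [hψ u hu]
  · have hu₀half : u₀ < 1 / 2 := hlt.trans_le hu.2
    obtain ⟨a, b, hab⟩ := haffφ hu₀half
    obtain ⟨a', b', hab'⟩ := haffψ
    have hu₀' : u₀ ∈ Icc (0 : ℝ) (1 / 2) := ⟨hu₀, hu₀half.le⟩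
    have h₀ := hab u₀ ⟨le_rfl, hu₀half.le⟩
    have h₁ := hab (1 / 2) ⟨hu₀half.le, le_rfl⟩
    have h₀' := hab' u₀ hu₀'
    have h₁' := hab' (1 / 2) ⟨by norm_num, le_rfl⟩
    have := nonneg_of_affine_nonneg_endpoints (a := a - a' + 2) (b := b - b' - 1)
      ⟨hlt.le, hu.2⟩ (by linarith [hφ0 u₀ ⟨hu₀, le_rfl⟩, hψ u₀ hu₀']) (by linarith)
    linarith [hab u ⟨hlt.le, hu.2⟩, hab' u hu]

theorem stmt5_general (ψ : ℝ → ℝ) (hψ : CtsPiecewiseAffine ψ)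
    (u₂ : ℝ) (hu₂ : u₂ < 1)
    (hc : ∃ c : ℝ, ∀ u ∈ Set.Icc u₂ (1:ℝ), ψ u = c)
    (haffψ : ∃ a b : ℝ, ∀ x ∈ Set.Icc (0:ℝ) (1/2:ℝ), ψ x = a * x + b)
    (hψ0 : ψ 0 = -1) (hψhalf : ψ (1/2) < 0)
    (φ : ℝ → ℝ) (hφ : CtsPiecewiseAffine φ)
    (u₀ : ℝ) (hu₀pos : 0 < u₀)
    (hφ0 : ∀ u ∈ Set.Icc (0:ℝ) u₀, φ u = 0)
    (hge : ∀ u ∈ Set.Icc (0:ℝ) 1, ψ u ≤ φ u)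
    (u₁ : ℝ) (hu₁ : u₁ < 1)
    (heq : ∀ u ∈ Set.Icc u₁ (1:ℝ), φ u = ψ u)
    (haffφ : u₀ < 1/2 → ∃ a b : ℝ, ∀ x ∈ Set.Icc u₀ (1/2:ℝ), φ x = a * x + b) :
    twist φ ≤ twist ψ - 4 := by
  obtain ⟨c, hψc⟩ := hc
  set s := max (max u₁ u₂) 0
  have hs0 : 0 ≤ s := le_max_right _ _
  have hs1 : s < 1 := max_lt (max_lt hu₁ hu₂) one_pos
  have hψc' : ∀ u ∈ Icc s 1, ψ u = c := fun u hu =>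
    hψc u ⟨(le_max_right _ _).trans ((le_max_left _ _).trans hu.1), hu.2⟩
  have hφc' : ∀ u ∈ Icc s 1, φ u = c := fun u hu => by
    rw [heq u ⟨(le_max_left _ _).trans ((le_max_left _ _).trans hu.1), hu.2⟩, hψc' u hu]
  obtain ⟨hIψ, hτψ⟩ := twist_add_integral_eq hψ hs0 hs1 hψc'
  obtain ⟨hIφ, hτφ⟩ := twist_add_integral_eq hφ hs0 hs1 hφc'
  have hsub : (fun u => 4 / (1 - u) ^ 3 * (φ u - c) - 4 / (1 - u) ^ 3 * (ψ u - c))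
      = fun u => 4 / (1 - u) ^ 3 * (φ u - ψ u) := by
    funext u
    ring
  have hJ := two_le_integral_four_div_one_sub_pow_three_mul (hsub ▸ hIφ.sub hIψ)
    (fun u hu => sub_nonneg.mpr (hge u ⟨by linarith [hu.1], hu.2⟩))
    (one_sub_two_mul_le_sub hu₀pos.le (le_two_mul_sub_one_of_affine haffψ hψ0 hψhalf.le)
      haffψ hφ0 (hge (1 / 2) ⟨by norm_num, by norm_num⟩) haffφ)
  rw [← hsub, intervalIntegral.integral_sub hIφ hIψ] at hJ
  rw [hφ0 0 ⟨le_rfl, hu₀pos.le⟩] at hτφ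
  rw [hψ0] at hτψ
  linarith

/-- (Function-level form of Lemma 3.3(2)(b).) Let `ψ` be continuous piecewise affine on
`[0,1]`, constant on `[u₂,1]` for some `u₂ < 1`, affine on `[0,1/2]`, with `ψ(0) = −1`
and `ψ(1/2) < 0`. Let `φ` be continuous piecewise affine such that `φ = 0` on `[0,u₀]`
for some `u₀ ∈ (0,1)`, `φ ≥ ψ` on `[0,1]`, `φ = ψ` on `[u₁,1]` for some `u₁ < 1`, and,
in case `u₀ < 1/2`, `φ` is affine on `[u₀,1/2]`. Then `τ(φ) ≤ τ(ψ) − 4`. -/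
theorem stmt5 (ψ : ℝ → ℝ) (hψ : CtsPiecewiseAffine ψ)
    (u₂ : ℝ) (hu₂ : u₂ < 1)
    (hc : ∃ c : ℝ, ∀ u ∈ Set.Icc u₂ (1:ℝ), ψ u = c)
    (haffψ : ∃ a b : ℝ, ∀ x ∈ Set.Icc (0:ℝ) (1/2:ℝ), ψ x = a * x + b)
    (hψ0 : ψ 0 = -1) (hψhalf : ψ (1/2) < 0)
    (φ : ℝ → ℝ) (hφ : CtsPiecewiseAffine φ)
    (u₀ : ℝ) (hu₀pos : 0 < u₀) (hu₀lt : u₀ < 1)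
    (hφ0 : ∀ u ∈ Set.Icc (0:ℝ) u₀, φ u = 0)
    (hge : ∀ u ∈ Set.Icc (0:ℝ) 1, ψ u ≤ φ u)
    (u₁ : ℝ) (hu₁ : u₁ < 1)
    (heq : ∀ u ∈ Set.Icc u₁ (1:ℝ), φ u = ψ u)
    (haffφ : u₀ < 1/2 → ∃ a b : ℝ, ∀ x ∈ Set.Icc u₀ (1/2:ℝ), φ x = a * x + b) :
    twist φ ≤ twist ψ - 4 :=
  stmt5_general ψ hψ u₂ hu₂ hc haffψ hψ0 hψhalf φ hφ u₀ hu₀pos hφ0 hge u₁ hu₁ heq haffφ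
end

section
/- Let p/q be a fraction in lowest terms with q ≥ 1. Then there exists a unique finite sequence of fractions in lowest terms p₀/q₀, p₁/q₁, …, p_n/q_n (the length n included) such that: p_n/q_n = p/q; q₀ = 1; q₀ < q₁ < ⋯ < q_n; p₀/q₀ < p₁/q₁ < ⋯ < p_n/q_n; and |p_k·q_{k−1} − q_k·p_{k−1}| = 1 for every 1 ≤ k ≤ n. Moreover, for this sequence p₀/q₀ = ⌊p/q⌋. -/
/-- `IsDecBasicEdgepath p q n P Q` says that the fractions
`P 0 / Q 0, P 1 / Q 1, …, P n / Q n` (all in lowest terms, with positive denominators)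
form the vertex sequence of a monotonically decreasing basic edgepath ending at `p/q`:
it ends at `p/q`, starts at denominator `1`, has strictly increasing denominators,
strictly increasing values, and consecutive fractions are Farey neighbours
(`|p_k·q_{k−1} − q_k·p_{k−1}| = 1`). -/
def IsDecBasicEdgepath (p q : ℤ) (n : ℕ) (P Q : ℕ → ℤ) : Prop :=
  P n = p ∧ Q n = q ∧ Q 0 = 1 ∧
  (∀ k ≤ n, Int.gcd (P k) (Q k) = 1 ∧ 1 ≤ Q k) ∧
  (∀ k < n, Q k < Q (k + 1)) ∧
  (∀ k < n, (P k : ℚ) / (Q k : ℚ) < (P (k + 1) : ℚ) / (Q (k + 1) : ℚ)) ∧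
  (∀ k < n, |P (k + 1) * Q k - Q (k + 1) * P k| = 1)

/-!
The last step of such a path comes from a Farey neighbour `x/y < p/q` with `p y - q x = 1` and
`0 < y < q`, and this predecessor is unique: as `p` is invertible modulo `q`, two of them have
congruent denominators in the interval `(0, q)`. Bézout's identity provides it whenever `q > 1`,
so the path exists by strong induction on `q` and is unique by induction on its length. The
floor is constant along the path, since a Farey neighbour with smaller denominator cannot lie
across an integer from `p/q`.
-/

theorem floor_intCast_div_eq_iff {p q m : ℤ} (hq : 0 < q) :
    ⌊(p : ℚ) / q⌋ = m ↔ m * q ≤ p ∧ p < (m + 1) * q := by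
  have hq' : (0 : ℚ) < q := by exact_mod_cast hq
  rw [Int.floor_eq_iff, le_div_iff₀ hq', div_lt_iff₀ hq']
  norm_cast

theorem intCast_div_lt_div_iff {x y p q : ℤ} (hy : 0 < y) (hq : 0 < q) :
    (x : ℚ) / y < p / q ↔ 0 < p * y - q * x := by
  rw [div_lt_div_iff₀ (by exact_mod_cast hy) (by exact_mod_cast hq), sub_pos, mul_comm q]
  norm_cast

theorem floor_div_eq_of_det_eq_one {x y p q : ℤ} (hy : 0 < y) (hyq : y < q)
    (hdet : p * y - q * x = 1) : ⌊(p : ℚ) / q⌋ = ⌊(x : ℚ) / y⌋ := by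
  obtain ⟨hlo, hhi⟩ := (floor_intCast_div_eq_iff hy).mp (rfl : ⌊(x : ℚ) / y⌋ = _)
  rw [floor_intCast_div_eq_iff (hy.trans hyq)]
  constructor <;> nlinarith

theorem exists_farey_pred {p q : ℤ} (hq : 1 < q) (hpq : IsCoprime p q) :
    ∃ x y : ℤ, 0 < y ∧ y < q ∧ p * y - q * x = 1 := by
  obtain ⟨a, b, hab⟩ := hpq
  have hdet : p * (a % q) - q * -(b + p * (a / q)) = 1 := by
    rw [Int.emod_def]; linear_combination hab
  refine ⟨_, a % q, ?_, Int.emod_lt_of_pos a (by omega), hdet⟩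
  rcases (Int.emod_nonneg a (by omega : q ≠ 0)).lt_or_eq with h | h
  · exact h
  · rw [← h] at hdet
    have := Int.eq_one_of_mul_eq_one_right (a := q) (b := b + p * (a / q)) (by omega)
      (by linear_combination hdet)
    omega

theorem farey_pred_unique {p q x y x' y' : ℤ} (hpq : IsCoprime p q)
    (hy : 0 < y) (hyq : y < q) (hy' : 0 < y') (hyq' : y' < q)
    (h : p * y - q * x = 1) (h' : p * y' - q * x' = 1) : x = x' ∧ y = y' := by
  have hdvd : q ∣ y - y' :=
    hpq.symm.dvd_of_dvd_mul_left ⟨x - x', by linear_combination h - h'⟩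
  obtain rfl : y = y' := by
    have := Int.eq_zero_of_abs_lt_dvd hdvd (abs_lt.mpr ⟨by omega, by omega⟩)
    omega
  exact ⟨mul_left_cancel₀ (by omega : q ≠ 0) (by linarith), rfl⟩

namespace IsDecBasicEdgepath

variable {p q : ℤ} {n : ℕ} {P Q : ℕ → ℤ}

theorem denom_pos (h : IsDecBasicEdgepath p q n P Q) : 0 < q :=
  h.2.1 ▸ (h.2.2.2.1 n le_rfl).2

theorem length_eq_zero_iff (h : IsDecBasicEdgepath p q n P Q) : n = 0 ↔ q = 1 := by
  obtain ⟨-, hQn, hQ0, hcop, hmono, -⟩ := h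
  constructor
  · rintro rfl
    exact hQn ▸ hQ0
  · intro hq
    by_contra hn
    obtain ⟨m, rfl⟩ := Nat.exists_eq_add_one_of_ne_zero hn
    have := hmono m m.lt_succ_self
    have := (hcop m m.le_succ).2
    omega

theorem congr {P' Q' : ℕ → ℤ} (h : IsDecBasicEdgepath p q n P Q)
    (hP : ∀ k ≤ n, P' k = P k) (hQ : ∀ k ≤ n, Q' k = Q k) :
    IsDecBasicEdgepath p q n P' Q' := by
  obtain ⟨hPn, hQn, hQ0, hcop, hmono, hval, hdet⟩ := h
  refine ⟨(hP n le_rfl).trans hPn, (hQ n le_rfl).trans hQn, (hQ 0 n.zero_le).trans hQ0,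
    fun k hk => ?_, fun k hk => ?_, fun k hk => ?_, fun k hk => ?_⟩
  · rw [hP k hk, hQ k hk]; exact hcop k hk
  all_goals simp only [hP k hk.le, hQ k hk.le, hP (k + 1) hk, hQ (k + 1) hk]
  exacts [hmono k hk, hval k hk, hdet k hk]

theorem _root_.isDecBasicEdgepath_succ_iff :
    IsDecBasicEdgepath p q (n + 1) P Q ↔
      IsDecBasicEdgepath (P n) (Q n) n P Q ∧ P (n + 1) = p ∧ Q (n + 1) = q ∧
        Int.gcd p q = 1 ∧ Q n < q ∧ p * Q n - q * P n = 1 := by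
  constructor
  · rintro ⟨rfl, rfl, hQ0, hcop, hmono, hval, hdet⟩
    have hQn : 0 < Q n := (hcop n (by omega)).2
    have hpos :=
      (intCast_div_lt_div_iff hQn (hQn.trans (hmono n (by omega)))).mp (hval n (by omega))
    refine ⟨⟨rfl, rfl, hQ0, fun k hk => hcop k (by omega), fun k hk => hmono k (by omega),
      fun k hk => hval k (by omega), fun k hk => hdet k (by omega)⟩,
      rfl, rfl, (hcop (n + 1) le_rfl).1, hmono n (by omega), ?_⟩
    rcases abs_eq (zero_le_one' ℤ) |>.mp (hdet n (by omega)) with h | h <;> omega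
  · rintro ⟨h, rfl, rfl, hpq, hlt, hdet⟩
    have hQn := h.denom_pos
    obtain ⟨-, -, hQ0, hcop, hmono, hval, habs⟩ := h
    refine ⟨rfl, rfl, hQ0, fun k hk => ?_, Nat.forall_lt_succ_right.mpr ⟨hmono, hlt⟩,
      Nat.forall_lt_succ_right.mpr ⟨hval, ?_⟩, Nat.forall_lt_succ_right.mpr ⟨habs, ?_⟩⟩
    · rcases hk.lt_or_eq with hk | rfl
      exacts [hcop k (by omega), ⟨hpq, by omega⟩]
    · exact (intCast_div_lt_div_iff hQn (hQn.trans hlt)).mpr (by omega)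
    · rw [hdet, abs_one]

theorem snoc {x y : ℤ} (h : IsDecBasicEdgepath x y n P Q) (hpq : Int.gcd p q = 1)
    (hyq : y < q) (hdet : p * y - q * x = 1) :
    IsDecBasicEdgepath p q (n + 1) (fun k => if k ≤ n then P k else p)
      (fun k => if k ≤ n then Q k else q) := by
  refine isDecBasicEdgepath_succ_iff.mpr ⟨?_, by simp, by simp, hpq, ?_, ?_⟩ <;>
    simp only [le_rfl, if_true, h.1, h.2.1]
  exacts [h.congr (fun k hk => if_pos hk) (fun k hk => if_pos hk), hyq, hdet]

theorem floor_eq (h : IsDecBasicEdgepath p q n P Q) : ⌊(p : ℚ) / q⌋ = P 0 := by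
  induction n generalizing p q with
  | zero =>
    obtain ⟨rfl, rfl, hQ0, -⟩ := h
    rw [hQ0, Int.cast_one, div_one, Int.floor_intCast]
  | succ n ih =>
    obtain ⟨htr, rfl, rfl, -, hlt, hdet⟩ := isDecBasicEdgepath_succ_iff.mp h
    rw [floor_div_eq_of_det_eq_one htr.denom_pos hlt hdet, ih htr]

theorem unique {n' : ℕ} {P' Q' : ℕ → ℤ} (h : IsDecBasicEdgepath p q n P Q)
    (h' : IsDecBasicEdgepath p q n' P' Q') :
    n' = n ∧ ∀ k ≤ n, P' k = P k ∧ Q' k = Q k := by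
  induction n generalizing p q n' with
  | zero =>
    obtain rfl : n' = 0 := h'.length_eq_zero_iff.mpr (h.length_eq_zero_iff.mp rfl)
    refine ⟨rfl, fun k hk => ?_⟩
    obtain rfl := Nat.le_zero.mp hk
    exact ⟨h'.1.trans h.1.symm, h'.2.1.trans h.2.1.symm⟩
  | succ n ih =>
    obtain ⟨m, rfl⟩ : ∃ m, n' = m + 1 := Nat.exists_eq_add_one_of_ne_zero fun h0 =>
      n.succ_ne_zero (h.length_eq_zero_iff.mpr (h'.length_eq_zero_iff.mp h0))
    obtain ⟨htr, hp, hq, hpq, hlt, hdet⟩ := isDecBasicEdgepath_succ_iff.mp h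
    obtain ⟨htr', hp', hq', -, hlt', hdet'⟩ := isDecBasicEdgepath_succ_iff.mp h'
    obtain ⟨hx, hy⟩ := farey_pred_unique (Int.isCoprime_iff_gcd_eq_one.mpr hpq)
      htr'.denom_pos hlt' htr.denom_pos hlt hdet' hdet
    rw [hx, hy] at htr'
    obtain ⟨rfl, hagree⟩ := ih htr htr'
    refine ⟨rfl, fun k hk => ?_⟩
    rcases hk.lt_or_eq with hk | rfl
    exacts [hagree k (by omega), ⟨hp'.trans hp.symm, hq'.trans hq.symm⟩]

end IsDecBasicEdgepath

theorem exists_isDecBasicEdgepath (p q : ℤ) (hq : 0 < q) (hpq : Int.gcd p q = 1) :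
    ∃ n P Q, IsDecBasicEdgepath p q n P Q := by
  rcases (show 1 ≤ q from hq).eq_or_lt with rfl | hq1
  · exact ⟨0, fun _ => p, fun _ => 1, rfl, rfl, rfl, fun _ _ => ⟨hpq, le_rfl⟩,
      fun _ hk => (Nat.not_lt_zero _ hk).elim, fun _ hk => (Nat.not_lt_zero _ hk).elim,
      fun _ hk => (Nat.not_lt_zero _ hk).elim⟩
  · obtain ⟨x, y, hy, hyq, hdet⟩ :=
      exists_farey_pred hq1 (Int.isCoprime_iff_gcd_eq_one.mpr hpq)
    obtain ⟨n, P, Q, h⟩ :=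
      exists_isDecBasicEdgepath x y hy (Int.isCoprime_iff_gcd_eq_one.mp ⟨-q, p, by linarith⟩)
    exact ⟨n + 1, _, _, h.snoc hpq hyq hdet⟩
termination_by q.toNat
decreasing_by omega

/-- For every fraction `p/q` in lowest terms with `q ≥ 1` there is a unique finite
sequence of fractions in lowest terms `p₀/q₀ < p₁/q₁ < ⋯ < p_n/q_n = p/q` with `q₀ = 1`,
strictly increasing denominators, and `|p_k·q_{k−1} − q_k·p_{k−1}| = 1` for all `k`
(the monotonically decreasing basic edgepath of `p/q`); moreover `p₀/q₀ = ⌊p/q⌋`. -/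
theorem stmt7 (p q : ℤ) (hq : 1 ≤ q) (hpq : Int.gcd p q = 1) :
    ∃ (n : ℕ) (P Q : ℕ → ℤ),
      IsDecBasicEdgepath p q n P Q ∧
      (P 0 : ℚ) / (Q 0 : ℚ) = ((⌊(p : ℚ) / (q : ℚ)⌋ : ℤ) : ℚ) ∧
      ∀ (n' : ℕ) (P' Q' : ℕ → ℤ), IsDecBasicEdgepath p q n' P' Q' →
        n' = n ∧ ∀ k ≤ n, P' k = P k ∧ Q' k = Q k := by
  obtain ⟨n, P, Q, h⟩ := exists_isDecBasicEdgepath p q hq hpq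
  refine ⟨n, P, Q, h, ?_, fun n' P' Q' h' => h.unique h'⟩
  rw [h.2.2.1, Int.cast_one, div_one, h.floor_eq]
end

section
/- Let p/q be a fraction in lowest terms with q ≥ 1. Then there exists a unique finite sequence of fractions in lowest terms p₀/q₀, p₁/q₁, …, p_n/q_n (the length n included) such that: p_n/q_n = p/q; q₀ = 1; q₀ < q₁ < ⋯ < q_n; p₀/q₀ > p₁/q₁ > ⋯ > p_n/q_n; and |p_k·q_{k−1} − q_k·p_{k−1}| = 1 for every 1 ≤ k ≤ n. Moreover, for this sequence p₀/q₀ = ⌈p/q⌉. -/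
/-- `IsIncBasicEdgepath p q n P Q` says that the fractions
`P 0 / Q 0, P 1 / Q 1, …, P n / Q n` (all in lowest terms, with positive denominators)
form the vertex sequence of a monotonically increasing basic edgepath ending at `p/q`:
it ends at `p/q`, starts at denominator `1`, has strictly increasing denominators,
strictly decreasing values, and consecutive fractions are Farey neighbours
(`|p_k·q_{k−1} − q_k·p_{k−1}| = 1`). -/
def IsIncBasicEdgepath (p q : ℤ) (n : ℕ) (P Q : ℕ → ℤ) : Prop :=
  P n = p ∧ Q n = q ∧ Q 0 = 1 ∧
  (∀ k ≤ n, Int.gcd (P k) (Q k) = 1 ∧ 1 ≤ Q k) ∧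
  (∀ k < n, Q k < Q (k + 1)) ∧
  (∀ k < n, (P k : ℚ) / (Q k : ℚ) > (P (k + 1) : ℚ) / (Q (k + 1) : ℚ)) ∧
  (∀ k < n, |P (k + 1) * Q k - Q (k + 1) * P k| = 1)

lemma frac_lt' {a b c d : ℤ} (hb : 1 ≤ b) (hd : 1 ≤ d) :
    (a:ℚ)/(b:ℚ) < (c:ℚ)/(d:ℚ) ↔ a*d < c*b := by
  have hb' : (0:ℚ) < (b:ℚ) := by exact_mod_cast lt_of_lt_of_le zero_lt_one hb
  have hd' : (0:ℚ) < (d:ℚ) := by exact_mod_cast lt_of_lt_of_le zero_lt_one hd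
  rw [div_lt_div_iff₀ hb' hd']
  exact_mod_cast Iff.rfl

lemma chain_lt' {n : ℕ} {Q : ℕ → ℤ} (h : ∀ k < n, Q k < Q (k+1)) :
    ∀ j ≤ n, 1 ≤ j → Q 0 < Q j := by
  intro j hj hj1
  induction j with
  | zero => omega
  | succ j ihj =>
    rcases Nat.eq_zero_or_pos j with h0 | h0
    · subst h0; exact h 0 (by omega)
    · exact lt_trans (ihj (by omega) h0) (h j (by omega))

lemma path_sign' {Pk Qk Pk1 Qk1 : ℤ} (hQk : 1 ≤ Qk) (hQk1 : 1 ≤ Qk1)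
    (hdec : (Pk1:ℚ)/(Qk1:ℚ) < (Pk:ℚ)/(Qk:ℚ)) (habs : |Pk1 * Qk - Qk1 * Pk| = 1) :
    Pk * Qk1 - Qk * Pk1 = 1 := by
  have hlt : Pk1 * Qk < Pk * Qk1 := (frac_lt' hQk1 hQk).mp hdec
  rcases abs_eq (by norm_num : (0:ℤ) ≤ 1) |>.mp habs with h | h
  · linarith
  · linarith

lemma pred_exists' {p q : ℤ} (hq : 2 ≤ q) (h : Int.gcd p q = 1) :
    ∃ a b : ℤ, a * q - b * p = 1 ∧ 1 ≤ b ∧ b < q ∧ Int.gcd a b = 1 := by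
  obtain ⟨u, v, huv⟩ := Int.isCoprime_iff_gcd_eq_one.mpr h
  set b := (-u) % q with hbdef
  have hq0 : 0 < q := by omega
  have hb0 : 0 ≤ b := Int.emod_nonneg _ (by omega)
  have hblt : b < q := Int.emod_lt_of_pos _ hq0
  have hb : b = -u - q * ((-u)/q) := by rw [hbdef, Int.emod_def]
  refine ⟨v - ((-u)/q) * p, b, ?_, ?_, hblt, ?_⟩
  · linear_combination huv - p * hb
  · rcases eq_or_lt_of_le hb0 with h0 | h0
    · exfalso
      have key : (v - ((-u)/q) * p) * q - b * p = 1 := by linear_combination huv - p * hb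
      rw [← h0] at key
      have : q ∣ 1 := ⟨v - ((-u)/q) * p, by linarith⟩
      have := Int.le_of_dvd one_pos this
      omega
    · omega
  · rw [← Int.isCoprime_iff_gcd_eq_one]
    exact ⟨q, -p, by ring_nf; linear_combination huv - p * hb⟩

lemma pred_unique' {p q a b a' b' : ℤ} (hpq : Int.gcd p q = 1)
    (h1 : a*q - b*p = 1) (h2 : a'*q - b'*p = 1)
    (hb : 1 ≤ b) (hb' : 1 ≤ b') (hbq : b < q) (hb'q : b' < q) : a = a' ∧ b = b' := by
  have hq0 : 0 < q := by omega
  have hco : IsCoprime q p :=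
    ((Int.isCoprime_iff_gcd_eq_one.mpr hpq)).symm
  have hdvd : q ∣ (b - b') * p := ⟨a - a', by linarith⟩
  obtain ⟨c, hc⟩ := hco.dvd_of_dvd_mul_right hdvd
  have hc1 : q * c < q := by linarith
  have hc2 : -q < q * c := by linarith
  have hc0 : c = 0 := by
    rcases lt_trichotomy c 0 with h | h | h
    · have := mul_le_mul_of_nonneg_left (show c ≤ -1 by omega) (by omega : (0:ℤ) ≤ q)
      linarith
    · exact h
    · have := mul_le_mul_of_nonneg_left (show 1 ≤ c by omega) (by omega : (0:ℤ) ≤ q)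
      linarith
  have hbb : b = b' := by rw [hc0, mul_zero] at hc; omega
  subst hbb
  refine ⟨?_, rfl⟩
  have h3 : (a - a') * q = 0 := by linarith
  rcases mul_eq_zero.mp h3 with h | h
  · omega
  · omega

lemma ceil_pred' {p q a b : ℤ} (hq : 2 ≤ q) (hb : 1 ≤ b) (hbq : b < q) (h : a*q - b*p = 1) :
    ⌈(a:ℚ)/(b:ℚ)⌉ = ⌈(p:ℚ)/(q:ℚ)⌉ := by
  set c := ⌈(p:ℚ)/(q:ℚ)⌉ with hc
  have hq' : (0:ℚ) < (q:ℚ) := by exact_mod_cast (by omega : (0:ℤ) < q)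
  have hb' : (0:ℚ) < (b:ℚ) := by exact_mod_cast (by omega : (0:ℤ) < b)
  have h1 : (p:ℚ)/q ≤ (c:ℚ) := Int.le_ceil _
  have h1' : p ≤ c * q := by
    have := (div_le_iff₀ hq').mp h1
    exact_mod_cast this
  have hne : p ≠ c * q := by
    intro he
    rw [he] at h
    have : q ∣ 1 := ⟨a - b * c, by linear_combination -h⟩
    have := Int.le_of_dvd one_pos this
    omega
  have h1'' : p + 1 ≤ c * q := by omega
  have haq : a * q ≤ (b * c) * q := by nlinarith
  have hac : a ≤ b * c := le_of_mul_le_mul_right haq (by omega)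
  have hub : (a:ℚ)/b ≤ (c:ℚ) := by
    rw [div_le_iff₀ hb']
    have : (a:ℚ) ≤ (c:ℚ) * (b:ℚ) := by exact_mod_cast (by nlinarith : a ≤ c * b)
    exact this
  have hlb : (c:ℚ) - 1 < (a:ℚ)/b := by
    have hcl : (c:ℚ) < (p:ℚ)/q + 1 := Int.ceil_lt_add_one _
    have hpa : (p:ℚ)/q < (a:ℚ)/b := (frac_lt' (by omega) hb).mpr (by nlinarith)
    linarith
  rw [Int.ceil_eq_iff]
  exact ⟨by exact_mod_cast hlb, hub⟩

lemma main_aux' : ∀ N : ℕ, ∀ p q : ℤ, q.toNat ≤ N → 1 ≤ q → Int.gcd p q = 1 →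
    ∃ (n : ℕ) (P Q : ℕ → ℤ),
      IsIncBasicEdgepath p q n P Q ∧
      (P 0 : ℚ) / (Q 0 : ℚ) = ((⌈(p : ℚ) / (q : ℚ)⌉ : ℤ) : ℚ) ∧
      ∀ (n' : ℕ) (P' Q' : ℕ → ℤ), IsIncBasicEdgepath p q n' P' Q' →
        n' = n ∧ ∀ k ≤ n, P' k = P k ∧ Q' k = Q k := by
  intro N
  induction N with
  | zero => intro p q hN hq _; exfalso; omega
  | succ N ih =>
    intro p q hN hq hpq
    rcases lt_or_ge q 2 with hq1 | hq2
    · -- base case q = 1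
      have hq1' : q = 1 := by omega
      subst hq1'
      refine ⟨0, fun _ => p, fun _ => 1, ⟨rfl, rfl, rfl, ?_, ?_, ?_, ?_⟩, ?_, ?_⟩
      · intro k _; exact ⟨by simpa using hpq, le_refl 1⟩
      · intro k hk; omega
      · intro k hk; omega
      · intro k hk; omega
      · push_cast
        simp
      · rintro n' P' Q' ⟨e1, e2, e3, e4, e5, e6, e7⟩
        have hn0 : n' = 0 := by
          by_contra hne
          have := chain_lt' e5 n' le_rfl (by omega)
          omega
        subst hn0
        refine ⟨rfl, fun k hk => ?_⟩
        interval_cases k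
        exact ⟨e1, e2⟩
    · -- inductive case q ≥ 2
      obtain ⟨a, b, hab, hb1, hbq, hgab⟩ := pred_exists' hq2 hpq
      have hbN : b.toNat ≤ N := by omega
      obtain ⟨m, Pm, Qm, ⟨f1, f2, f3, f4, f5, f6, f7⟩, fceil, funiq⟩ := ih a b hbN hb1 hgab
      refine ⟨m + 1, fun k => if k ≤ m then Pm k else p, fun k => if k ≤ m then Qm k else q,
        ⟨?_, ?_, ?_, ?_, ?_, ?_, ?_⟩, ?_, ?_⟩
      · simp
      · simp
      · simpa using f3
      · intro k hk
        rcases le_or_gt k m with h | h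
        · simpa [h] using f4 k h
        · have : ¬ (k ≤ m) := by omega
          simp [this]
          exact ⟨hpq, hq⟩
      · intro k hk
        rcases Nat.lt_or_ge k m with h | h
        · simpa [Nat.le_of_lt h, Nat.succ_le_of_lt h] using f5 k h
        · have hkm : k = m := by omega
          subst hkm
          simp [f2]
          exact hbq
      · intro k hk
        rcases Nat.lt_or_ge k m with h | h
        · simpa [Nat.le_of_lt h, Nat.succ_le_of_lt h] using f6 k h
        · have hkm : k = m := by omega
          subst hkm
          have hgt : (p:ℚ)/(q:ℚ) < (a:ℚ)/(b:ℚ) := (frac_lt' (by omega) hb1).mpr (by nlinarith)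
          simpa [show ¬ (k + 1 ≤ k) from by omega, f1, f2] using hgt
      · intro k hk
        rcases Nat.lt_or_ge k m with h | h
        · simpa [Nat.le_of_lt h, Nat.succ_le_of_lt h] using f7 k h
        · have hkm : k = m := by omega
          subst hkm
          have habs : |p * b - q * a| = 1 := by
            have hval : p * b - q * a = -1 := by linarith
            rw [hval]; norm_num
          simpa [show ¬ (k + 1 ≤ k) from by omega, f1, f2] using habs
      · simp only [Nat.zero_le, if_pos]
        rw [fceil]
        exact_mod_cast congrArg (fun z : ℤ => (z : ℚ)) (ceil_pred' hq2 hb1 hbq hab)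
      · rintro n' P' Q' ⟨g1, g2, g3, g4, g5, g6, g7⟩
        have hn'pos : n' ≠ 0 := by
          intro h0
          subst h0
          rw [g3] at g2
          omega
        obtain ⟨n'', rfl⟩ : ∃ k, n' = k + 1 := ⟨n' - 1, by omega⟩
        have hQl : 1 ≤ Q' n'' := (g4 n'' (by omega)).2
        have hQlt : Q' n'' < q := by
          have := g5 n'' (by omega)
          rwa [g2] at this
        have hsign : P' n'' * q - Q' n'' * p = 1 := by
          have hdec := g6 n'' (by omega)
          have habs := g7 n'' (by omega)
          rw [g1, g2] at hdec habs
          exact path_sign' hQl hq hdec habs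
        obtain ⟨hPa, hQb⟩ := pred_unique' hpq hsign hab hQl hb1 hQlt hbq
        have htrunc : IsIncBasicEdgepath a b n'' P' Q' :=
          ⟨hPa, hQb, g3, fun k hk => g4 k (by omega), fun k hk => g5 k (by omega),
            fun k hk => g6 k (by omega), fun k hk => g7 k (by omega)⟩
        obtain ⟨hnm, heq⟩ := funiq n'' P' Q' htrunc
        subst hnm
        refine ⟨rfl, fun k hk => ?_⟩
        rcases le_or_gt k n'' with h | h
        · obtain ⟨hp', hq'⟩ := heq k h
          simp [h, hp', hq']
        · have hk1 : k = n'' + 1 := by omega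
          subst hk1
          simp [g1, g2]

/-- For every fraction `p/q` in lowest terms with `q ≥ 1` there is a unique finite
sequence of fractions in lowest terms `p₀/q₀ > p₁/q₁ > ⋯ > p_n/q_n = p/q` with `q₀ = 1`,
strictly increasing denominators, and `|p_k·q_{k−1} − q_k·p_{k−1}| = 1` for all `k`
(the monotonically increasing basic edgepath of `p/q`); moreover `p₀/q₀ = ⌈p/q⌉`. -/
theorem stmt8 (p q : ℤ) (hq : 1 ≤ q) (hpq : Int.gcd p q = 1) :
    ∃ (n : ℕ) (P Q : ℕ → ℤ),
      IsIncBasicEdgepath p q n P Q ∧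
      (P 0 : ℚ) / (Q 0 : ℚ) = ((⌈(p : ℚ) / (q : ℚ)⌉ : ℤ) : ℚ) ∧
      ∀ (n' : ℕ) (P' Q' : ℕ → ℤ), IsIncBasicEdgepath p q n' P' Q' →
        n' = n ∧ ∀ k ≤ n, P' k = P k ∧ Q' k = Q k :=
  main_aux' q.toNat p q le_rfl hq hpq
end

section
/- Let p/q be a fraction in lowest terms with q ≥ 1, and let p₀/q₀ < p₁/q₁ < ⋯ < p_n/q_n = p/q be the unique sequence with q₀ = 1, strictly increasing denominators q₀ < q₁ < ⋯ < q_n, and |p_k·q_{k−1} − q_k·p_{k−1}| = 1 for all k (the monotonically decreasing basic edgepath of p/q). Then the denominator gaps are nondecreasing: q_{k+1} − q_k ≥ q_k − q_{k−1} for every 1 ≤ k ≤ n−1. Consequently, the continuous piecewise-linear function through the points ((q_k − 1)/q_k, p_k/q_k), k = 0, …, n, is concave; by the symmetric argument (replacing p by −p), the piecewise-linear function determined by the monotonically increasing basic edgepath of p/q is convex. -/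
/-- `InterpolatesEdgepath n P Q f`: `f : ℝ → ℝ` is the continuous piecewise-linear
function through the points `((Q k − 1)/Q k, P k / Q k)`, `k = 0, …, n`, i.e. it takes
these values and is affine on each subinterval between consecutive `u`-coordinates. -/
def InterpolatesEdgepath (n : ℕ) (P Q : ℕ → ℤ) (f : ℝ → ℝ) : Prop :=
  (∀ k ≤ n, f (((Q k : ℝ) - 1) / (Q k : ℝ)) = (P k : ℝ) / (Q k : ℝ)) ∧
  (∀ k < n, ∃ a b : ℝ,
    ∀ x ∈ Set.Icc (((Q k : ℝ) - 1) / (Q k : ℝ)) (((Q (k + 1) : ℝ) - 1) / (Q (k + 1) : ℝ)),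
      f x = a * x + b)

/-- The knot `u`-coordinates. -/
noncomputable def uu (Q : ℕ → ℤ) (k : ℕ) : ℝ := ((Q k : ℝ) - 1) / (Q k : ℝ)

/-- The slope of the `k`-th segment. -/
noncomputable def AA (Q : ℕ → ℤ) (k : ℕ) : ℝ := ((Q (k + 1) : ℝ) - (Q k : ℝ))⁻¹

lemma mainDec (p q : ℤ) (n : ℕ) (P Q : ℕ → ℤ) (hdec : IsDecBasicEdgepath p q n P Q) :
    (∀ k : ℕ, 1 ≤ k → k + 1 ≤ n → Q k - Q (k - 1) ≤ Q (k + 1) - Q k) ∧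
    (∀ f : ℝ → ℝ, InterpolatesEdgepath n P Q f →
      ConcaveOn ℝ (Set.Icc (0 : ℝ) (((Q n : ℝ) - 1) / (Q n : ℝ))) f) := by
  obtain ⟨hPn, hQn, hQ0, hcop, hQm, hval, hdet⟩ := hdec
  have hQpos : ∀ k ≤ n, 1 ≤ Q k := fun k hk => (hcop k hk).2
  -- the determinant is positive
  have hdet1 : ∀ k < n, P (k + 1) * Q k - Q (k + 1) * P k = 1 := by
    intro k hk
    have h1 := hval k hk
    have hq1' : (1 : ℚ) ≤ (Q k : ℚ) := by exact_mod_cast hQpos k hk.le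
    have hq2' : (1 : ℚ) ≤ (Q (k + 1) : ℚ) := by exact_mod_cast hQpos (k + 1) hk
    rw [div_lt_div_iff₀ (by linarith) (by linarith)] at h1
    have h2 : P k * Q (k + 1) < P (k + 1) * Q k := by exact_mod_cast h1
    have h3 := hdet k hk
    rcases (abs_eq (by norm_num : (0 : ℤ) ≤ 1)).mp h3 with h | h
    · exact h
    · exfalso; linarith
  -- part 1 : gaps are nondecreasing
  have part1 : ∀ k : ℕ, 1 ≤ k → k + 1 ≤ n → Q k - Q (k - 1) ≤ Q (k + 1) - Q k := by
    intro k hk1 hkn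
    obtain ⟨k, rfl⟩ : ∃ m, k = m + 1 := ⟨k - 1, by omega⟩
    simp only [Nat.add_sub_cancel]
    have e1 : P (k + 1) * Q k - Q (k + 1) * P k = 1 := hdet1 k (by omega)
    have e2 : P (k + 2) * Q (k + 1) - Q (k + 2) * P (k + 1) = 1 := hdet1 (k + 1) (by omega)
    have hdvd : Q (k + 1) ∣ (Q (k + 2) + Q k) * P (k + 1) :=
      ⟨P (k + 2) + P k, by linear_combination e1 - e2⟩
    have hdvd2 : Q (k + 1) ∣ Q (k + 2) + Q k :=
      Int.dvd_of_dvd_mul_left_of_gcd_one hdvd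
        (by rw [Int.gcd_comm]; exact (hcop (k + 1) (by omega)).1)
    obtain ⟨t, ht⟩ := hdvd2
    have h1 : 1 ≤ Q k := hQpos k (by omega)
    have h2 : Q (k + 1) < Q (k + 2) := hQm (k + 1) (by omega)
    have h3 : Q k < Q (k + 1) := hQm k (by omega)
    have hq1 : 1 ≤ Q (k + 1) := hQpos (k + 1) (by omega)
    have ht2 : 2 ≤ t := by
      by_contra hcon
      push_neg at hcon
      have hle : t ≤ 1 := by omega
      have := mul_le_mul_of_nonneg_left hle (by linarith : (0 : ℤ) ≤ Q (k + 1))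
      linarith
    have := mul_le_mul_of_nonneg_left ht2 (by linarith : (0 : ℤ) ≤ Q (k + 1))
    linarith
  refine ⟨part1, ?_⟩
  intro f hf
  have hd : ∀ k ≤ n, (1 : ℝ) ≤ (Q k : ℝ) := fun k hk => by exact_mod_cast hQpos k hk
  have hdpos : ∀ k ≤ n, (0 : ℝ) < (Q k : ℝ) := fun k hk =>
    lt_of_lt_of_le zero_lt_one (hd k hk)
  have hu0 : uu Q 0 = 0 := by simp [uu, hQ0]
  have humono : ∀ k < n, uu Q k < uu Q (k + 1) := by
    intro k hk
    have h0 := hdpos k hk.le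
    have h1 := hdpos (k + 1) hk
    have h2 : (Q k : ℝ) < (Q (k + 1) : ℝ) := by exact_mod_cast hQm k hk
    show ((Q k : ℝ) - 1) / (Q k : ℝ) < ((Q (k + 1) : ℝ) - 1) / (Q (k + 1) : ℝ)
    rw [div_lt_div_iff₀ h0 h1]
    nlinarith
  have humono' : ∀ i j, i ≤ j → j ≤ n → uu Q i ≤ uu Q j := by
    intro i j
    induction j with
    | zero => intro h _; simp [Nat.le_zero.mp h]
    | succ j ih =>
      intro hij hjn
      rcases Nat.eq_or_lt_of_le hij with h | h
      · rw [h]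
      · exact le_trans (ih (by omega) (by omega)) (humono j (by omega)).le
  have hgapmono : ∀ i j, i ≤ j → j < n → Q (i + 1) - Q i ≤ Q (j + 1) - Q j := by
    intro i j
    induction j with
    | zero => intro h _; simp [Nat.le_zero.mp h]
    | succ j ih =>
      intro hij hjn
      rcases Nat.eq_or_lt_of_le hij with h | h
      · rw [h]
      · refine le_trans (ih (by omega) (by omega)) ?_
        have := part1 (j + 1) (by omega) (by omega)
        simpa using this
  have hAanti : ∀ i j, i ≤ j → j < n → AA Q j ≤ AA Q i := by
    intro i j hij hjn
    have h1 : (Q (i + 1) - Q i : ℤ) ≤ Q (j + 1) - Q j := hgapmono i j hij hjn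
    have h2 : (0 : ℤ) < Q (i + 1) - Q i := by have := hQm i (by omega); omega
    show ((Q (j + 1) : ℝ) - (Q j : ℝ))⁻¹ ≤ ((Q (i + 1) : ℝ) - (Q i : ℝ))⁻¹
    apply inv_anti₀
    · exact_mod_cast h2
    · exact_mod_cast h1
  -- slope of each segment
  have hseg : ∀ j, j < n → ∀ x ∈ Set.Icc (uu Q j) (uu Q (j + 1)),
      ∀ y ∈ Set.Icc (uu Q j) (uu Q (j + 1)), f y - f x = AA Q j * (y - x) := by
    intro j hj x hx y hy
    obtain ⟨a, b, hab⟩ := hf.2 j hj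
    have hxj : f x = a * x + b := hab x hx
    have hyj : f y = a * y + b := hab y hy
    have hj0 : f (uu Q j) = a * uu Q j + b := hab _ ⟨le_refl _, (humono j hj).le⟩
    have hj1 : f (uu Q (j + 1)) = a * uu Q (j + 1) + b := hab _ ⟨(humono j hj).le, le_refl _⟩
    have hv0 : f (uu Q j) = (P j : ℝ) / (Q j : ℝ) := hf.1 j hj.le
    have hv1 : f (uu Q (j + 1)) = (P (j + 1) : ℝ) / (Q (j + 1) : ℝ) := hf.1 (j + 1) hj
    have hdj : (Q j : ℝ) ≠ 0 := (hdpos j hj.le).ne'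
    have hdj1 : (Q (j + 1) : ℝ) ≠ 0 := (hdpos (j + 1) hj).ne'
    have hdetR : (P (j + 1) : ℝ) * (Q j : ℝ) - (Q (j + 1) : ℝ) * (P j : ℝ) = 1 := by
      exact_mod_cast hdet1 j hj
    have hne : (Q (j + 1) : ℝ) - (Q j : ℝ) ≠ 0 := by
      have : (Q j : ℝ) < (Q (j + 1) : ℝ) := by exact_mod_cast hQm j hj
      linarith
    have h5 : a * (uu Q (j + 1) - uu Q j)
        = (P (j + 1) : ℝ) / (Q (j + 1) : ℝ) - (P j : ℝ) / (Q j : ℝ) := by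
      rw [← hv1, ← hv0, hj0, hj1]; ring
    have key : a * ((Q (j + 1) : ℝ) - (Q j : ℝ)) = 1 := by
      show a * ((Q (j + 1) : ℝ) - (Q j : ℝ)) = 1
      unfold uu at h5
      field_simp at h5
      nlinarith [h5, hdetR]
    have ha : a = AA Q j := by
      show a = ((Q (j + 1) : ℝ) - (Q j : ℝ))⁻¹
      field_simp
      linarith [key]
    rw [hxj, hyj, ha]; ring
  -- Claim B : to the right of a point of segment j the slope is at most `AA Q j`
  have claimB : ∀ m, ∀ j, n ≤ j + m → j < n → ∀ y z, uu Q j ≤ y → y ≤ uu Q (j + 1) →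
      y ≤ z → z ≤ uu Q n → f z - f y ≤ AA Q j * (z - y) := by
    intro m
    induction m with
    | zero => intro j h1 h2; omega
    | succ m ih =>
      intro j h1 hj y z hy1 hy2 hyz hz
      rcases le_or_gt z (uu Q (j + 1)) with hcase | hcase
      · exact (hseg j hj y ⟨hy1, hy2⟩ z ⟨hy1.trans hyz, hcase⟩).le
      · have hj1 : j + 1 < n := by
          rcases Nat.lt_or_ge (j + 1) n with h | h
          · exact h
          · exfalso
            have hjn : j + 1 = n := by omega
            rw [hjn] at hcase; linarith
        have step1 : f (uu Q (j + 1)) - f y = AA Q j * (uu Q (j + 1) - y) :=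
          hseg j hj y ⟨hy1, hy2⟩ (uu Q (j + 1)) ⟨(humono j hj).le, le_refl _⟩
        have step2 : f z - f (uu Q (j + 1)) ≤ AA Q (j + 1) * (z - uu Q (j + 1)) :=
          ih (j + 1) (by omega) hj1 (uu Q (j + 1)) z (le_refl _)
            (humono' (j + 1) (j + 2) (by omega) (by omega)) hcase.le hz
        have hAle : AA Q (j + 1) ≤ AA Q j := hAanti j (j + 1) (by omega) hj1
        have h0 : (0 : ℝ) ≤ z - uu Q (j + 1) := by linarith
        have := mul_le_mul_of_nonneg_right hAle h0
        nlinarith [this, step1, step2]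
  -- Claim A : to the left of a point of segment j the slope is at least `AA Q j`
  have claimA : ∀ j, j < n → ∀ x y, 0 ≤ x → x ≤ y → uu Q j ≤ y → y ≤ uu Q (j + 1) →
      AA Q j * (y - x) ≤ f y - f x := by
    intro j
    induction j with
    | zero =>
      intro hj x y hx hxy hy1 hy2
      exact (hseg 0 hj x ⟨by rw [hu0]; exact hx, hxy.trans hy2⟩ y ⟨hy1, hy2⟩).ge
    | succ j ih =>
      intro hj x y hx hxy hy1 hy2
      rcases le_or_gt (uu Q (j + 1)) x with hcase | hcase
      · exact (hseg (j + 1) hj x ⟨hcase, hxy.trans hy2⟩ y ⟨hy1, hy2⟩).ge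
      · have hjn : j < n := by omega
        have step1 : f y - f (uu Q (j + 1)) = AA Q (j + 1) * (y - uu Q (j + 1)) :=
          hseg (j + 1) hj (uu Q (j + 1)) ⟨le_refl _, (humono (j + 1) hj).le⟩ y ⟨hy1, hy2⟩
        have step2 : AA Q j * (uu Q (j + 1) - x) ≤ f (uu Q (j + 1)) - f x :=
          ih hjn x (uu Q (j + 1)) hx hcase.le (humono j hjn).le (le_refl _)
        have hAle : AA Q (j + 1) ≤ AA Q j := hAanti j (j + 1) (by omega) hj
        have h0 : (0 : ℝ) ≤ y - uu Q (j + 1) := by linarith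
        have := mul_le_mul_of_nonneg_right hAle h0
        nlinarith [this, step1, step2]
  -- locating a point in a segment
  have hfind : ∀ m, m ≤ n → 1 ≤ m → ∀ y, uu Q 0 ≤ y → y ≤ uu Q m →
      ∃ j, j < m ∧ uu Q j ≤ y ∧ y ≤ uu Q (j + 1) := by
    intro m
    induction m with
    | zero => intro _ h; omega
    | succ m ih =>
      intro hmn _ y hy0 hym
      rcases Nat.eq_zero_or_pos m with rfl | hm
      · exact ⟨0, by omega, hy0, hym⟩
      · rcases le_or_gt y (uu Q m) with h | h
        · obtain ⟨j, hj, h1, h2⟩ := ih (by omega) hm y hy0 h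
          exact ⟨j, by omega, h1, h2⟩
        · exact ⟨m, by omega, h.le, hym⟩
  -- assemble
  refine concaveOn_of_slope_anti_adjacent (convex_Icc _ _) ?_
  intro x y z hx hz hxy hyz
  obtain ⟨hx0, hxn⟩ := hx
  obtain ⟨hz0, hzn⟩ := hz
  have hxn' : x ≤ uu Q n := hxn
  have hzn' : z ≤ uu Q n := hzn
  have hn1 : 1 ≤ n := by
    by_contra h
    have hn0 : n = 0 := by omega
    rw [hn0, hu0] at hzn'
    linarith
  have hy0 : uu Q 0 ≤ y := by rw [hu0]; linarith
  have hyn : y ≤ uu Q n := by linarith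
  obtain ⟨j, hj, hj1, hj2⟩ := hfind n (le_refl n) hn1 y hy0 hyn
  have hB := claimB (n - j) j (by omega) hj y z hj1 hj2 hyz.le hzn'
  have hA := claimA j hj x y hx0 hxy.le hj1 hj2
  rw [div_le_div_iff₀ (by linarith) (by linarith)]
  have hB' := mul_le_mul_of_nonneg_right hB (by linarith : (0 : ℝ) ≤ y - x)
  have hA' := mul_le_mul_of_nonneg_right hA (by linarith : (0 : ℝ) ≤ z - y)
  nlinarith [hB', hA']

/-- For the monotonically decreasing basic edgepath `p₀/q₀ < ⋯ < p_n/q_n = p/q` of a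
fraction `p/q` in lowest terms (`q ≥ 1`), the denominator gaps are nondecreasing:
`q_{k+1} − q_k ≥ q_k − q_{k−1}` for `1 ≤ k ≤ n−1`. Consequently the continuous
piecewise-linear function through the points `((q_k − 1)/q_k, p_k/q_k)` is concave on
`[0, (q_n − 1)/q_n]`, and symmetrically the piecewise-linear function determined by the
monotonically increasing basic edgepath of `p/q` is convex. -/
theorem stmt9 (p q : ℤ) (hq : 1 ≤ q) (hpq : Int.gcd p q = 1)
    (n : ℕ) (P Q : ℕ → ℤ) (hdec : IsDecBasicEdgepath p q n P Q) :
    (∀ k : ℕ, 1 ≤ k → k + 1 ≤ n → Q k - Q (k - 1) ≤ Q (k + 1) - Q k) ∧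
    (∀ f : ℝ → ℝ, InterpolatesEdgepath n P Q f →
      ConcaveOn ℝ (Set.Icc (0 : ℝ) (((Q n : ℝ) - 1) / (Q n : ℝ))) f) ∧
    (∀ (n' : ℕ) (P' Q' : ℕ → ℤ), IsIncBasicEdgepath p q n' P' Q' →
      ∀ g : ℝ → ℝ, InterpolatesEdgepath n' P' Q' g →
        ConvexOn ℝ (Set.Icc (0 : ℝ) (((Q' n' : ℝ) - 1) / (Q' n' : ℝ))) g) := by
  obtain ⟨h1, h2⟩ := mainDec p q n P Q hdec
  refine ⟨h1, h2, ?_⟩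
  intro n' P' Q' hinc g hg
  obtain ⟨hPn, hQn, hQ0, hcop, hQm, hval, hdet⟩ := hinc
  have hdec' : IsDecBasicEdgepath (-p) q n' (fun k => -P' k) Q' := by
    refine ⟨by simp [hPn], hQn, hQ0, fun k hk => ⟨?_, (hcop k hk).2⟩, hQm,
      fun k hk => ?_, fun k hk => ?_⟩
    · show Int.gcd (-P' k) (Q' k) = 1
      rw [Int.gcd]
      rw [Int.natAbs_neg]
      exact (hcop k hk).1
    · show ((-P' k : ℤ) : ℚ) / (Q' k : ℚ) < ((-P' (k + 1) : ℤ) : ℚ) / (Q' (k + 1) : ℚ)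
      have := hval k hk
      push_cast
      rw [neg_div, neg_div]
      exact neg_lt_neg this
    · show |(-P' (k + 1)) * Q' k - Q' (k + 1) * (-P' k)| = 1
      rw [show (-P' (k + 1)) * Q' k - Q' (k + 1) * (-P' k)
          = -(P' (k + 1) * Q' k - Q' (k + 1) * P' k) by ring, abs_neg]
      exact hdet k hk
  have hg' : InterpolatesEdgepath n' (fun k => -P' k) Q' (fun x => -(g x)) := by
    refine ⟨fun k hk => ?_, fun k hk => ?_⟩
    · show -(g (((Q' k : ℝ) - 1) / (Q' k : ℝ))) = ((-P' k : ℤ) : ℝ) / (Q' k : ℝ)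
      rw [hg.1 k hk]
      push_cast
      rw [neg_div]
    · obtain ⟨a, b, hab⟩ := hg.2 k hk
      exact ⟨-a, -b, fun x hx => by show -(g x) = -a * x + -b; rw [hab x hx]; ring⟩
  have hconc := (mainDec (-p) q n' (fun k => -P' k) Q' hdec').2 (fun x => -(g x)) hg'
  exact neg_concaveOn_iff.mp hconc
end

section
/- Let N ≥ 3 be an integer and let r₁, …, r_N be integers with r_i ≤ −1 for every i, such that the number of indices i with r_i = −1 is at least the number of indices i with r_i ≤ −3. Set R = ∑_{i=1}^N 1/(−r_i) and u₀ = 1/R. Then 0 < u₀ ≤ 2/N and 2N − (N−2)·(2/(1−u₀)) ≥ 0. -/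
/-- (Subclaim of Claim 4 in the proof of Proposition 4.1.) Let `N ≥ 3` and let
`r₁, …, r_N` be integers with `r_i ≤ −1`, such that the number of indices with
`r_i = −1` is at least the number of indices with `r_i ≤ −3`. With `R = ∑ 1/(−r_i)` and
`u₀ = 1/R`, one has `0 < u₀ ≤ 2/N` and `2N − (N−2)·(2/(1−u₀)) ≥ 0` (so the remainder
term of the monotonically decreasing type I edgepath system is non-negative). -/
theorem stmt14 (N : ℕ) (hN : 3 ≤ N) (r : Fin N → ℤ)
    (hr : ∀ i, r i ≤ -1)
    (hcard : (Finset.univ.filter fun i => r i ≤ -3).card ≤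
      (Finset.univ.filter fun i => r i = -1).card)
    (R u₀ : ℝ) (hR : R = ∑ i, 1 / (-(r i : ℝ))) (hu₀ : u₀ = 1 / R) :
    0 < u₀ ∧ u₀ ≤ 2 / (N : ℝ) ∧
    0 ≤ 2 * (N : ℝ) - ((N : ℝ) - 2) * (2 / (1 - u₀)) := by
  classical
  have hterm : ∀ i, (if r i = -1 then (1:ℝ) else if r i ≤ -3 then 0 else 1/2)
      ≤ 1 / (-(r i : ℝ)) := by
    intro i
    by_cases h : r i = -1
    · simp [h]
    · by_cases h3 : r i ≤ -3
      · have hpos : (0:ℝ) < -(r i : ℝ) := by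
          have : (r i : ℝ) ≤ -3 := by exact_mod_cast h3
          linarith
        simp only [h, h3, if_false, if_true]
        positivity
      · have h2 : r i = -2 := by have := hr i; omega
        simp [h2]
  -- sum of the lower bounds
  set A := Finset.univ.filter (fun i => r i = -1) with hAdef
  set s := Finset.univ.filter (fun i => ¬ r i = -1) with hsdef
  have hsum1 : (∑ i, (if r i = -1 then (1:ℝ) else if r i ≤ -3 then 0 else 1/2))
      = A.card + (s.filter fun i => ¬ r i ≤ -3).card * (1/2) := by
    rw [Finset.sum_ite]
    rw [Finset.sum_ite]
    simp [hAdef, hsdef, Finset.filter_filter, mul_comm]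
  have hCs : (s.filter fun i => r i ≤ -3) = Finset.univ.filter (fun i => r i ≤ -3) := by
    ext i
    simp only [hsdef, Finset.mem_filter, Finset.filter_filter, Finset.mem_univ, true_and]
    constructor
    · tauto
    · intro h; exact ⟨by omega, h⟩
  have hcard1 : A.card + s.card = N := by
    have := Finset.card_filter_add_card_filter_not (s := (Finset.univ : Finset (Fin N)))
      (p := fun i => r i = -1)
    simpa [hAdef, hsdef, Finset.card_univ] using this
  have hcard2 : (s.filter fun i => r i ≤ -3).card + (s.filter fun i => ¬ r i ≤ -3).card
      = s.card := Finset.card_filter_add_card_filter_not (p := fun i => r i ≤ -3)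
  set a := A.card
  set c := (Finset.univ.filter (fun i => r i ≤ -3)).card
  set d := (s.filter fun i => ¬ r i ≤ -3).card
  have habc : a + c + d = N := by
    have hcd : (Finset.filter (fun i => r i ≤ -3) s).card = c := by rw [hCs]
    omega
  have hac : c ≤ a := hcard
  -- R ≥ N/2
  have hRge : (N : ℝ) / 2 ≤ R := by
    have h1 : (∑ i, (if r i = -1 then (1:ℝ) else if r i ≤ -3 then 0 else 1/2)) ≤ R := by
      rw [hR]; exact Finset.sum_le_sum fun i _ => hterm i
    rw [hsum1] at h1
    have : (N : ℝ) ≤ a + c + d := by exact_mod_cast habc.ge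
    have hca : (c : ℝ) ≤ a := by exact_mod_cast hac
    linarith
  have hNpos : (0:ℝ) < N := by
    have : (3:ℝ) ≤ N := by exact_mod_cast hN
    linarith
  have hRpos : 0 < R := by linarith [hRge, hNpos]
  have hu₀pos : 0 < u₀ := by rw [hu₀]; positivity
  have hu₀le : u₀ ≤ 2 / N := by
    rw [hu₀, div_le_div_iff₀ hRpos hNpos]
    linarith
  refine ⟨hu₀pos, hu₀le, ?_⟩
  have hNu : (N:ℝ) * u₀ ≤ 2 := by
    have := mul_le_mul_of_nonneg_left hu₀le (le_of_lt hNpos)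
    rw [mul_div_cancel₀] at this
    · exact this
    · exact ne_of_gt hNpos
  have h1u : (0:ℝ) < 1 - u₀ := by
    have : u₀ ≤ 2/3 := le_trans hu₀le (by
      apply div_le_div_of_nonneg_left (by norm_num) (by norm_num)
      exact_mod_cast hN)
    linarith
  rw [sub_nonneg, show ((N:ℝ) - 2) * (2 / (1 - u₀)) = (2*((N:ℝ)-2)) / (1 - u₀) by ring,
    div_le_iff₀ h1u]
  nlinarith [hNu, hu₀pos]
end
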